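/- arXiv:math/0611358 — 4 statements merged into one kernel-verified Lean document; each statement's English description precedes it below -/
import Mathlib

section
/- An R-module is Gorenstein injective if and only if it is a direct summand of a strongly Gorenstein injective R-module. -/
/-! Definitions for Gorenstein homological algebra over an arbitrary
associative ring `R` (left modules; right modules are `Rᵐᵒᵖ`-modules). -/

universe u

section Defs

variable (R : Type u) [Ring R]

/-- `0 → A → B → C → 0` is a short exact sequence. -/
def IsSES {A B C : Type u} [AddCommGroup A] [Module R A] [AddCommGroup B] [Module R B]
    [AddCommGroup C] [Module R C] (f : A →ₗ[R] B) (g : B →ₗ[R] C) : Prop :=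
  Function.Injective f ∧ Function.Exact f g ∧ Function.Surjective g

/-- `M` is Gorenstein projective: it is the kernel of a map in a doubly infinite exact
complex of projective modules which stays exact under `Hom_R(-, Q)` for every projective `Q`. -/
def GorensteinProjective (M : Type u) [AddCommGroup M] [Module R M] : Prop :=
  ∃ (P : ℤ → Type u) (_ : ∀ i, AddCommGroup (P i)) (_ : ∀ i, Module R (P i))
    (d : ∀ i, P i →ₗ[R] P (i + 1)),
      (∀ i, Module.Projective R (P i)) ∧
      (∀ i, Function.Exact (d i) (d (i + 1))) ∧
      Nonempty (M ≃ₗ[R] LinearMap.ker (d 0)) ∧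
      (∀ (Q : Type u) (_ : AddCommGroup Q) (_ : Module R Q), Module.Projective R Q →
        ∀ i, Function.Exact (fun g : P (i + 1 + 1) →ₗ[R] Q => g.comp (d (i + 1)))
          (fun g : P (i + 1) →ₗ[R] Q => g.comp (d i)))

/-- `M` is strongly Gorenstein projective: there is a complete projective resolution
with a single projective module `P` and a single map `f`. -/
def StronglyGorensteinProjective (M : Type u) [AddCommGroup M] [Module R M] : Prop :=
  ∃ (P : Type u) (_ : AddCommGroup P) (_ : Module R P) (f : P →ₗ[R] P),
    Module.Projective R P ∧
    Function.Exact f f ∧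
    Nonempty (M ≃ₗ[R] LinearMap.ker f) ∧
    (∀ (Q : Type u) (_ : AddCommGroup Q) (_ : Module R Q), Module.Projective R Q →
      Function.Exact (fun g : P →ₗ[R] Q => g.comp f) (fun g : P →ₗ[R] Q => g.comp f))

/-- `M` is Gorenstein injective (dual to Gorenstein projective). -/
def GorensteinInjective (M : Type u) [AddCommGroup M] [Module R M] : Prop :=
  ∃ (I : ℤ → Type u) (_ : ∀ i, AddCommGroup (I i)) (_ : ∀ i, Module R (I i))
    (d : ∀ i, I i →ₗ[R] I (i + 1)),
      (∀ i, Module.Injective R (I i)) ∧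
      (∀ i, Function.Exact (d i) (d (i + 1))) ∧
      Nonempty (M ≃ₗ[R] LinearMap.ker (d 0)) ∧
      (∀ (E : Type u) (_ : AddCommGroup E) (_ : Module R E), Module.Injective R E →
        ∀ i, Function.Exact (fun g : E →ₗ[R] I i => (d i).comp g)
          (fun g : E →ₗ[R] I (i + 1) => (d (i + 1)).comp g))

/-- `M` is strongly Gorenstein injective. -/
def StronglyGorensteinInjective (M : Type u) [AddCommGroup M] [Module R M] : Prop :=
  ∃ (I : Type u) (_ : AddCommGroup I) (_ : Module R I) (f : I →ₗ[R] I),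
    Module.Injective R I ∧
    Function.Exact f f ∧
    Nonempty (M ≃ₗ[R] LinearMap.ker f) ∧
    (∀ (E : Type u) (_ : AddCommGroup E) (_ : Module R E), Module.Injective R E →
      Function.Exact (fun g : E →ₗ[R] I => f.comp g) (fun g : E →ₗ[R] I => f.comp g))

/-- `M` admits a resolution `0 → G_n → ⋯ → G_0 → M → 0` by modules satisfying `𝒢`
(formalized as an `ℕ`-indexed resolution vanishing in degrees `> n`). -/
def HasLeftResolutionLE
    (𝒢 : ∀ (N : Type u) [AddCommGroup N] [Module R N], Prop)
    (M : Type u) [AddCommGroup M] [Module R M] (n : ℕ) : Prop :=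
  ∃ (G : ℕ → Type u) (_ : ∀ i, AddCommGroup (G i)) (_ : ∀ i, Module R (G i))
    (d : ∀ i, G (i + 1) →ₗ[R] G i) (π : G 0 →ₗ[R] M),
      (∀ i, 𝒢 (G i)) ∧
      (∀ i, n < i → Subsingleton (G i)) ∧
      Function.Surjective π ∧ Function.Exact (d 0) π ∧
      (∀ i, Function.Exact (d (i + 1)) (d i))

/-- `M` admits a coresolution `0 → M → G^0 → ⋯ → G^n → 0` by modules satisfying `𝒢`. -/
def HasRightResolutionLE
    (𝒢 : ∀ (N : Type u) [AddCommGroup N] [Module R N], Prop)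
    (M : Type u) [AddCommGroup M] [Module R M] (n : ℕ) : Prop :=
  ∃ (G : ℕ → Type u) (_ : ∀ i, AddCommGroup (G i)) (_ : ∀ i, Module R (G i))
    (d : ∀ i, G i →ₗ[R] G (i + 1)) (ι : M →ₗ[R] G 0),
      (∀ i, 𝒢 (G i)) ∧
      (∀ i, n < i → Subsingleton (G i)) ∧
      Function.Injective ι ∧ Function.Exact ι (d 0) ∧
      (∀ i, Function.Exact (d i) (d (i + 1)))

variable (M : Type u) [AddCommGroup M] [Module R M]

/-- Projective dimension, valued in `ℕ∞`. -/
noncomputable def pDim : ℕ∞ :=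
  sInf ((↑) '' {n : ℕ | HasLeftResolutionLE R (fun N _ _ => Module.Projective R N) M n})

/-- Injective dimension, valued in `ℕ∞`. -/
noncomputable def iDim : ℕ∞ :=
  sInf ((↑) '' {n : ℕ | HasRightResolutionLE R (fun N _ _ => Module.Injective R N) M n})

/-- Gorenstein projective dimension, valued in `ℕ∞`. -/
noncomputable def gpDim : ℕ∞ :=
  sInf ((↑) '' {n : ℕ | HasLeftResolutionLE R (fun N _ _ => GorensteinProjective R N) M n})

/-- Gorenstein injective dimension, valued in `ℕ∞`. -/
noncomputable def giDim : ℕ∞ :=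
  sInf ((↑) '' {n : ℕ | HasRightResolutionLE R (fun N _ _ => GorensteinInjective R N) M n})

/-- The left global dimension of `R`. -/
noncomputable def gldim : ℕ∞ :=
  sSup {d : ℕ∞ | ∃ (M : Type u) (_ : AddCommGroup M) (_ : Module R M), d = pDim R M}

/-- The left finitistic projective dimension of `R`. -/
noncomputable def FPD : ℕ∞ :=
  sSup {d : ℕ∞ | ∃ (M : Type u) (_ : AddCommGroup M) (_ : Module R M),
    pDim R M ≠ ⊤ ∧ d = pDim R M}

/-- The left Gorenstein global dimension of `R`: `sup { Gpd_R(M) }`. -/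
noncomputable def GPgldim : ℕ∞ :=
  sSup {d : ℕ∞ | ∃ (M : Type u) (_ : AddCommGroup M) (_ : Module R M), d = gpDim R M}

/-- `sup { Gid_R(M) }` over all left `R`-modules `M`. -/
noncomputable def GIgldim : ℕ∞ :=
  sSup {d : ℕ∞ | ∃ (M : Type u) (_ : AddCommGroup M) (_ : Module R M), d = giDim R M}

end Defs
section Aux

lemma forall_int_succ {P : ℤ → Prop} (H : ∀ i : ℤ, P (i + 1)) : ∀ j : ℤ, P j := by
  intro j
  have := H (j - 1)
  rwa [Int.sub_add_cancel] at this

lemma injective_pi (R : Type u) [Ring R] {ι : Type} (I : ι → Type u) [∀ i, AddCommGroup (I i)]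
    [∀ i, Module R (I i)] (h : ∀ i, Module.Injective R (I i)) :
    Module.Injective R (∀ i, I i) := by
  constructor
  intro X Y _ _ _ _ f hf g
  have H : ∀ i, ∃ k : Y →ₗ[R] I i, ∀ x, k (f x) = g x i := by
    intro i
    exact (h i).out f hf
      { toFun := fun x => g x i, map_add' := by intros; simp,
        map_smul' := by intros; simp }
  choose k hk using H
  exact ⟨LinearMap.pi k, fun x => funext fun i => hk i x⟩

lemma forward (R : Type u) [Ring R] (M : Type u) [AddCommGroup M] [Module R M]
    (hM : GorensteinInjective R M) :
    ∃ (S : Type u) (_ : AddCommGroup S) (_ : Module R S),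
      StronglyGorensteinInjective R S ∧
      ∃ (N : Type u) (_ : AddCommGroup N) (_ : Module R N), Nonempty (S ≃ₗ[R] M × N) := by
  classical
  obtain ⟨I, _, _, d, hinj, hex, ⟨em⟩, hhom⟩ := hM
  let e : ℤ ≃ ℤ := Equiv.addRight 1
  let E : (∀ i : ℤ, I (i + 1)) ≃ₗ[R] ∀ i : ℤ, I i :=
    LinearEquiv.piCongrLeft R I e
  have hEsymm : ∀ (x : ∀ i : ℤ, I i) (i : ℤ), E.symm x i = x (i + 1) := fun x i => rfl
  let f₀ : (∀ i : ℤ, I i) →ₗ[R] ∀ i : ℤ, I (i + 1) :=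
    LinearMap.pi (fun i => (d i).comp (LinearMap.proj i))
  let f : (∀ i : ℤ, I i) →ₗ[R] ∀ i : ℤ, I i := E.toLinearMap.comp f₀
  have hf0 : ∀ (x : ∀ i : ℤ, I i) (i : ℤ), f₀ x i = d i (x i) := fun _ _ => rfl
  have hfE : ∀ x, f x = E (f₀ x) := fun _ => rfl
  have hfzero : ∀ x, f x = 0 ↔ ∀ i, d i (x i) = 0 := by
    intro x
    rw [hfE, LinearEquiv.map_eq_zero_iff]
    constructor
    · intro h i; rw [← hf0]; rw [h]; rfl
    · intro h; funext i; exact h i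
  have hfval : ∀ (x : ∀ i : ℤ, I i) (i : ℤ), f x (i + 1) = d i (x i) := by
    intro x i
    have h1 : E.symm (f x) = f₀ x := by rw [hfE, LinearEquiv.symm_apply_apply]
    have := congrFun h1 i
    rw [hEsymm] at this
    exact this
  -- f ∘ f = 0
  have hff : ∀ x, f (f x) = 0 := by
    intro x
    rw [hfzero]
    apply forall_int_succ (P := fun j => d j (f x j) = 0)
    intro i
    rw [hfval]
    exact (hex i).apply_apply_eq_zero (x i)
  -- exactness
  have hexf : Function.Exact f f := by
    intro y
    constructor
    · intro hy
      rw [hfzero] at hy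
      have hrec : ∀ i, ∃ z, d i z = y (i + 1) := by
        intro i
        have h2 : y (i + 1) ∈ Set.range (d i) := (hex i (y (i + 1))).mp (hy (i + 1))
        exact h2
      choose x hx using hrec
      refine ⟨x, ?_⟩
      have : f₀ x = E.symm y := funext fun i => by rw [hf0, hEsymm]; exact hx i
      rw [hfE, this, LinearEquiv.apply_symm_apply]
    · rintro ⟨x, rfl⟩
      exact hff x

  -- Hom exactness
  have hhomf : ∀ (W : Type u) (_ : AddCommGroup W) (_ : Module R W), Module.Injective R W →
      Function.Exact (fun k : W →ₗ[R] (∀ i : ℤ, I i) => f.comp k)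
        (fun k : W →ₗ[R] (∀ i : ℤ, I i) => f.comp k) := by
    intro W _ _ hW
    intro h
    constructor
    · intro hh
      have hcomp : ∀ w (i : ℤ), d i (h w i) = 0 := by
        intro w i
        have h1 : f (h w) = 0 := by
          have := LinearMap.congr_fun hh w
          exact this
        exact (hfzero (h w)).mp h1 i
      have hrec : ∀ i : ℤ, ∃ γ : W →ₗ[R] I i,
          (d i).comp γ = (LinearMap.proj (i+1)).comp h := by
        intro i
        have h0 : (d (i+1)).comp ((LinearMap.proj (i+1)).comp h) = 0 := by
          ext w
          exact hcomp w (i+1)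
        exact (hhom W _ _ hW i ((LinearMap.proj (i+1)).comp h)).mp h0
      choose γ hγ using hrec
      refine ⟨LinearMap.pi γ, ?_⟩
      refine LinearMap.ext fun w => ?_
      show f (LinearMap.pi γ w) = h w
      have h2 : f₀ (LinearMap.pi γ w) = E.symm (h w) := by
        funext i
        rw [hf0, hEsymm]
        exact LinearMap.congr_fun (hγ i) w
      rw [hfE, h2, LinearEquiv.apply_symm_apply]
    · rintro ⟨k, rfl⟩
      refine LinearMap.ext fun w => ?_
      exact hff (k w)
  -- the kernel of f
  have hmemker : ∀ x : ∀ i : ℤ, I i, x ∈ LinearMap.ker f ↔ ∀ i, d i (x i) = 0 := by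
    intro x; rw [LinearMap.mem_ker]; exact hfzero x
  let equiv1 : (LinearMap.ker f) ≃ₗ[R] ∀ i : ℤ, (LinearMap.ker (d i)) :=
    { toFun := fun x => fun i => ⟨x.1 i, LinearMap.mem_ker.mpr ((hmemker x.1).mp x.2 i)⟩
      map_add' := fun x y => rfl
      map_smul' := fun c x => rfl
      invFun := fun y => ⟨fun i => (y i).1, (hmemker _).mpr fun i => LinearMap.mem_ker.mp (y i).2⟩
      left_inv := fun x => Subtype.ext rfl
      right_inv := fun y => funext fun i => Subtype.ext rfl }
  let N : Type u := ∀ i : {i : ℤ // i ≠ 0}, (LinearMap.ker (d i.1))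
  let equiv2 : (∀ i : ℤ, (LinearMap.ker (d i))) ≃ₗ[R] (LinearMap.ker (d 0)) × N :=
    { toFun := fun y => (y 0, fun i => y i.1)
      map_add' := fun x y => rfl
      map_smul' := fun c x => rfl
      invFun := fun p => fun i => if hi : i = 0 then (hi.symm ▸ p.1) else p.2 ⟨i, hi⟩
      left_inv := by
        intro y
        funext i
        by_cases hi : i = 0
        · subst hi; simp
        · simp [hi]
      right_inv := by
        intro p
        refine Prod.ext ?_ ?_
        · simp
        · funext i
          simp [i.2] }
  refine ⟨↥(LinearMap.ker f), inferInstance, inferInstance, ?_, ?_⟩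
  · exact ⟨∀ i : ℤ, I i, inferInstance, inferInstance, f, injective_pi R I hinj, hexf,
      ⟨LinearEquiv.refl R _⟩, hhomf⟩
  · exact ⟨N, inferInstance, inferInstance,
      ⟨equiv1.trans (equiv2.trans (LinearEquiv.prodCongr em.symm (LinearEquiv.refl R N)))⟩⟩

lemma injective_prod (R : Type u) [Ring R] (A B : Type u) [AddCommGroup A] [Module R A]
    [AddCommGroup B] [Module R B] (hA : Module.Injective R A) (hB : Module.Injective R B) :
    Module.Injective R (A × B) := by
  constructor
  intro X Y _ _ _ _ f hf g
  obtain ⟨h1, hh1⟩ := hA.out f hf ((LinearMap.fst R A B).comp g)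
  obtain ⟨h2, hh2⟩ := hB.out f hf ((LinearMap.snd R A B).comp g)
  exact ⟨h1.prod h2, fun x => Prod.ext (hh1 x) (hh2 x)⟩

lemma injective_retract (R : Type u) [Ring R] {A : Type u} [AddCommGroup A] [Module R A]
    (hA : Module.Injective R A) (p : Submodule R A)
    (r : A →ₗ[R] p) (hr : ∀ x : p, r (x : A) = x) : Module.Injective R p := by
  constructor
  intro X Y _ _ _ _ f hf g
  obtain ⟨h, hh⟩ := hA.out f hf (p.subtype.comp g)
  exact ⟨r.comp h, fun x => by simp [hh x, hr]⟩

lemma backward (R : Type u) [Ring R] (M N : Type u) [AddCommGroup M] [Module R M]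
    [AddCommGroup N] [Module R N]
    (I : Type u) [AddCommGroup I] [Module R I] (g : I →ₗ[R] I)
    (hinj : Module.Injective R I) (hex : Function.Exact g g)
    (eMN : (LinearMap.ker g) ≃ₗ[R] M × N)
    (hhom : ∀ (E : Type u) (_ : AddCommGroup E) (_ : Module R E), Module.Injective R E →
      Function.Exact (fun h : E →ₗ[R] I => g.comp h) (fun h : E →ₗ[R] I => g.comp h)) :
    GorensteinInjective R M := by
  classical
  -- the countable product J of copies of I, with G = g^ℕ
  set J := (ℕ → I) with hJ
  let G : J →ₗ[R] J := LinearMap.pi (fun i => g.comp (LinearMap.proj i))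
  have hGv : ∀ (x : J) (i : ℕ), G x i = g (x i) := fun _ _ => rfl
  have hgg : ∀ x : I, g (g x) = 0 := fun x => hex.apply_apply_eq_zero x
  have hGG : ∀ x : J, G (G x) = 0 := fun x => funext fun i => hgg (x i)
  have injJ : Module.Injective R J := injective_pi R (fun _ : ℕ => I) (fun _ => hinj)
  have hexG : Function.Exact G G := by
    intro y
    constructor
    · intro hy
      have hrec : ∀ i, ∃ z, g z = y i := fun i => (hex (y i)).mp (congrFun hy i)
      choose x hx using hrec
      exact ⟨x, funext fun i => hx i⟩
    · rintro ⟨x, rfl⟩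
      exact hGG x
  have hkerG_range : ∀ x : J, G x = 0 → ∃ y, G y = x := fun x hx => (hexG x).mp hx
  have starJ : ∀ (E : Type u) [AddCommGroup E] [Module R E], Module.Injective R E →
      ∀ h : E →ₗ[R] J, G.comp h = 0 → ∃ k : E →ₗ[R] J, G.comp k = h := by
    intro E _ _ hE h hh
    have hrec : ∀ i : ℕ, ∃ k : E →ₗ[R] I, g.comp k = (LinearMap.proj i).comp h := by
      intro i
      refine (hhom E _ _ hE ((LinearMap.proj i).comp h)).mp ?_
      refine LinearMap.ext fun w => ?_
      exact congrFun (LinearMap.congr_fun hh w) i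
    choose k hk using hrec
    refine ⟨LinearMap.pi k, LinearMap.ext fun w => funext fun i => ?_⟩
    exact LinearMap.congr_fun (hk i) w
  -- the kernel of G and the "shift" endomorphism w on it
  set KJ := LinearMap.ker G with hKJ
  have hmemKJ : ∀ x : J, x ∈ KJ ↔ ∀ i, g (x i) = 0 := by
    intro x
    rw [hKJ, LinearMap.mem_ker]
    exact ⟨fun h i => congrFun h i, fun h => funext h⟩

  -- identify KJ with ℕ → M × N
  let step1 : ↥KJ ≃ₗ[R] ∀ _ : ℕ, ↥(LinearMap.ker g) :=
    { toFun := fun x => fun i => ⟨x.1 i, LinearMap.mem_ker.mpr ((hmemKJ x.1).mp x.2 i)⟩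
      map_add' := fun x y => rfl
      map_smul' := fun c x => rfl
      invFun := fun y => ⟨fun i => (y i).1, (hmemKJ _).mpr fun i => LinearMap.mem_ker.mp (y i).2⟩
      left_inv := fun x => Subtype.ext rfl
      right_inv := fun y => funext fun i => Subtype.ext rfl }
  let κ : ↥KJ ≃ₗ[R] (ℕ → M × N) :=
    step1.trans (LinearEquiv.piCongrRight fun _ => eMN)
  -- the split epi wV on ℕ → M × N with kernel M
  let wV : (ℕ → M × N) →ₗ[R] (ℕ → M × N) :=
    { toFun := fun v i => ((v (i+1)).1, (v i).2)
      map_add' := fun a b => rfl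
      map_smul' := fun c a => rfl }
  let sV : (ℕ → M × N) →ₗ[R] (ℕ → M × N) :=
    { toFun := fun v i => (Nat.casesOn i 0 fun j => (v j).1, (v i).2)
      map_add' := by intro a b; funext i; cases i <;> simp
      map_smul' := by intro c a; funext i; cases i <;> simp }
  have hwsV : ∀ v, wV (sV v) = v := fun v => funext fun i => rfl
  let ιM : M →ₗ[R] (ℕ → M × N) :=
    { toFun := fun m i => (Nat.casesOn i m fun _ => 0, 0)
      map_add' := by intro a b; funext i; cases i <;> simp
      map_smul' := by intro c a; funext i; cases i <;> simp }
  have hιMinj : Function.Injective ιM := by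
    intro m m' h
    exact congrArg Prod.fst (congrFun h 0)
  have hwι : ∀ m, wV (ιM m) = 0 := fun m => funext fun i => rfl
  have hkerwV : ∀ v, wV v = 0 → v = ιM ((v 0).1) := by
    intro v hv
    funext i
    have h1 : ∀ j, ((v (j+1)).1, (v j).2) = ((0 : M), (0 : N)) := fun j => congrFun hv j
    cases i with
    | zero =>
      have h2 : (v 0).2 = 0 := congrArg Prod.snd (h1 0)
      show v 0 = ((v 0).1, (0 : N))
      rw [← h2]
    | succ j =>
      have ha : (v (j+1)).1 = 0 := congrArg Prod.fst (h1 j)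
      have hb : (v (j+1)).2 = 0 := congrArg Prod.snd (h1 (j+1))
      show v (j+1) = ((0 : M), (0 : N))
      rw [← ha, ← hb]
  -- transport to KJ
  let w : ↥KJ →ₗ[R] ↥KJ := κ.symm.toLinearMap ∘ₗ wV ∘ₗ κ.toLinearMap
  let wbar : ↥KJ →ₗ[R] ↥KJ := κ.symm.toLinearMap ∘ₗ sV ∘ₗ κ.toLinearMap
  have hwwbar : ∀ k, w (wbar k) = k := by
    intro k
    show κ.symm (wV (κ (κ.symm (sV (κ k))))) = k
    rw [κ.apply_symm_apply, hwsV, κ.symm_apply_apply]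
  let μ : M →ₗ[R] ↥KJ := κ.symm.toLinearMap ∘ₗ ιM
  have hμinj : Function.Injective μ := by
    intro m m' h
    exact hιMinj (κ.symm.injective h)
  have hwμ : ∀ m, w (μ m) = 0 := by
    intro m
    show κ.symm (wV (κ (κ.symm (ιM m)))) = 0
    rw [κ.apply_symm_apply, hwι, map_zero]
  have hkerw : ∀ k, w k = 0 → ∃ m, μ m = k := by
    intro k hk
    have h1 : wV (κ k) = 0 := by
      have : κ.symm (wV (κ k)) = 0 := hk
      rwa [LinearEquiv.map_eq_zero_iff] at this
    refine ⟨((κ k 0).1), ?_⟩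
    show κ.symm (ιM ((κ k 0).1)) = k
    rw [← hkerwV (κ k) h1, κ.symm_apply_apply]

  -- lifting w to a chain endomorphism family ψ of the complex (J, G)
  have hKJle : ∀ x : J, x ∈ KJ ↔ G x = 0 := fun x => LinearMap.mem_ker
  obtain ⟨ψ0, hψ0⟩ := injJ.out KJ.subtype (Submodule.injective_subtype KJ) (KJ.subtype ∘ₗ w)
  have hψ0K : ∀ x : ↥KJ, ψ0 x.1 = (w x).1 := fun x => hψ0 x
  have hψ0inv : ∀ x : J, G x = 0 → G (ψ0 x) = 0 := by
    intro x hx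
    rw [hψ0K ⟨x, (hKJle x).mpr hx⟩]
    exact (hKJle _).mp (w ⟨x, (hKJle x).mpr hx⟩).2
  have stepUpEx : ∀ f : J →ₗ[R] J, (∀ x : J, G x = 0 → G (f x) = 0) →
      ∃ f', f' ∘ₗ G = G ∘ₗ f ∧ (∀ x : J, G x = 0 → G (f' x) = 0) := by
    intro f hf
    have h1 : KJ ≤ LinearMap.ker (G ∘ₗ f) := by
      intro x hx
      exact LinearMap.mem_ker.mpr (hf x ((hKJle x).mp hx))
    have hghat : Function.Injective (Submodule.liftQ KJ G (le_refl _)) := by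
      rw [← LinearMap.ker_eq_bot]
      exact Submodule.ker_liftQ_eq_bot KJ G (le_refl _) (le_refl _)
    obtain ⟨f', hf'⟩ := injJ.out (Submodule.liftQ KJ G (le_refl _)) hghat
      (Submodule.liftQ KJ (G ∘ₗ f) h1)
    have hcomm : f' ∘ₗ G = G ∘ₗ f := by
      refine LinearMap.ext fun x => ?_
      have h2 : f' (Submodule.liftQ KJ G (le_refl _) (Submodule.Quotient.mk x)) =
          Submodule.liftQ KJ (G ∘ₗ f) h1 (Submodule.Quotient.mk x) := hf' _
      rw [Submodule.liftQ_apply, Submodule.liftQ_apply] at h2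
      exact h2
    refine ⟨f', hcomm, ?_⟩
    · intro x hx
      obtain ⟨y, hy⟩ := hkerG_range x hx
      rw [← hy]
      have h4 : f' (G y) = G (f y) := LinearMap.congr_fun hcomm y
      rw [h4]
      exact hGG (f y)
  have stepDownEx : ∀ f : J →ₗ[R] J, (∀ x : J, G x = 0 → G (f x) = 0) →
      ∃ f'', G ∘ₗ f'' = f ∘ₗ G ∧ (∀ x : J, G x = 0 → G (f'' x) = 0) := by
    intro f hf
    obtain ⟨f'', hf''⟩ := starJ J injJ (f ∘ₗ G) (by
      refine LinearMap.ext fun x => ?_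
      exact hf (G x) (hGG x))
    refine ⟨f'', hf'', ?_⟩
    intro x hx
    have := LinearMap.congr_fun hf'' x
    simp only [LinearMap.comp_apply] at this
    rw [this, hx, map_zero]
  -- ℕ-indexed towers
  let Tty := {f : J →ₗ[R] J // ∀ x : J, G x = 0 → G (f x) = 0}
  let base : Tty := ⟨ψ0, hψ0inv⟩
  let stepU : Tty → Tty := fun f => ⟨(stepUpEx f.1 f.2).choose, (stepUpEx f.1 f.2).choose_spec.2⟩
  let stepD : Tty → Tty := fun f => ⟨(stepDownEx f.1 f.2).choose, (stepDownEx f.1 f.2).choose_spec.2⟩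
  let up : ℕ → Tty := fun n => Nat.rec base (fun _ acc => stepU acc) n
  let down : ℕ → Tty := fun n => Nat.rec base (fun _ acc => stepD acc) n
  have hup : ∀ n : ℕ, (up (n+1)).1 ∘ₗ G = G ∘ₗ (up n).1 := fun n =>
    (stepUpEx (up n).1 (up n).2).choose_spec.1
  have hdown : ∀ n : ℕ, G ∘ₗ (down (n+1)).1 = (down n).1 ∘ₗ G := fun n =>
    (stepDownEx (down n).1 (down n).2).choose_spec.1
  let ψ : ℤ → (J →ₗ[R] J) := fun n => if 0 ≤ n then (up n.toNat).1 else (down (-n).toNat).1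
  have hψnat : ∀ n : ℤ, 0 ≤ n → ψ n = (up n.toNat).1 := fun n hn => if_pos hn
  have hψneg : ∀ n : ℤ, ¬ 0 ≤ n → ψ n = (down (-n).toNat).1 := fun n hn => if_neg hn
  have hψzero : ψ 0 = ψ0 := by
    rw [hψnat 0 le_rfl]
    rfl
  have hψ0w : ∀ x : ↥KJ, ψ 0 x.1 = (w x).1 := by rw [hψzero]; exact hψ0K
  have hψinv : ∀ n : ℤ, ∀ x : J, G x = 0 → G (ψ n x) = 0 := by
    intro n
    by_cases hn : 0 ≤ n
    · rw [hψnat n hn]; exact (up n.toNat).2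
    · rw [hψneg n hn]; exact (down (-n).toNat).2
  have hchain : ∀ n : ℤ, (ψ (n+1)) ∘ₗ G = G ∘ₗ (ψ n) := by
    intro n
    rcases lt_trichotomy n (-1) with hn | hn | hn
    · have h1 : ¬ 0 ≤ n := by omega
      have h2 : ¬ 0 ≤ n + 1 := by omega
      rw [hψneg n h1, hψneg (n+1) h2]
      have h3 : (-n).toNat = (-(n+1)).toNat + 1 := by omega
      rw [h3]
      exact (hdown (-(n+1)).toNat).symm
    · subst hn
      have h1 : ¬ 0 ≤ (-1 : ℤ) := by omega
      rw [hψneg (-1) h1]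
      show ψ ((-1) + 1) ∘ₗ G = G ∘ₗ (down ((- (-1 : ℤ))).toNat).1
      have h2 : ((-1 : ℤ) + 1) = 0 := by omega
      rw [h2, hψzero]
      have h3 : (-(-1 : ℤ)).toNat = 1 := by omega
      rw [h3]
      have h4 := hdown 0
      exact h4.symm
    · have h1 : 0 ≤ n := by omega
      have h2 : 0 ≤ n + 1 := by omega
      rw [hψnat n h1, hψnat (n+1) h2]
      have h3 : (n+1).toNat = n.toNat + 1 := by omega
      rw [h3]
      exact hup n.toNat
  have hchainv : ∀ (n : ℤ) (x : J), ψ (n+1) (G x) = G (ψ n x) := fun n x =>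
    LinearMap.congr_fun (hchain n) x

  -- the complex C with terms J × J and its two-step differential
  let Fst := LinearMap.fst R J J
  let Snd := LinearMap.snd R J J
  let Cd : ℤ → (J × J →ₗ[R] J × J) := fun n =>
    LinearMap.prod (G ∘ₗ Fst) (- ((ψ n) ∘ₗ Fst) - G ∘ₗ Snd)
  have hCdv : ∀ (n : ℤ) (v : J × J), Cd n v = (G v.1, - ψ n v.1 - G v.2) := fun n v => rfl
  have hCdCd : ∀ (n : ℤ) (v : J × J), Cd (n+1) (Cd n v) = 0 := by
    intro n v
    have h1 : G (G v.1) = 0 := hGG v.1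
    have h2 : - ψ (n+1) (G v.1) - G (- ψ n v.1 - G v.2) = 0 := by
      rw [map_sub, map_neg, hGG v.2, hchainv n v.1]
      abel
    have h3 : Cd (n+1) (Cd n v) =
        (G (G v.1), - ψ (n+1) (G v.1) - G (- ψ n v.1 - G v.2)) := rfl
    rw [h3, h1, h2]
    rfl
  -- exactness chase for C
  have hCex : ∀ (n : ℤ) (x a : J), G x = 0 → - ψ (n+1) x - G a = 0 →
      ∃ y b : J, G y = x ∧ - ψ n y - G b = a := by
    intro n x a h1 h2
    obtain ⟨y, hy⟩ := hkerG_range x h1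
    have h5 : G a = - ψ (n+1) x := by
      have h6 : - ψ (n+1) x = G a := by rwa [sub_eq_zero] at h2
      exact h6.symm
    have h3 : G (- a - ψ n y) = 0 := by
      have h4 : G (ψ n y) = ψ (n+1) x := by rw [← hy]; exact (hchainv n y).symm
      rw [map_sub, map_neg, h4, h5]
      abel
    obtain ⟨b, hb⟩ := hkerG_range _ h3
    refine ⟨y, b, hy, ?_⟩
    rw [hb]
    abel
  -- Hom-exactness chase for C
  have hChom : ∀ (E : Type u) [AddCommGroup E] [Module R E], Module.Injective R E →
      ∀ (n : ℤ) (α β : E →ₗ[R] J), G ∘ₗ α = 0 → (∀ e, - ψ (n+1) (α e) - G (β e) = 0) →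
      ∃ γ δ : E →ₗ[R] J, G ∘ₗ γ = α ∧ (∀ e, - ψ n (γ e) - G (δ e) = β e) := by
    intro E _ _ hE n α β h1 h2
    obtain ⟨γ, hγ⟩ := starJ E hE α h1
    have h3 : G ∘ₗ (- β - ψ n ∘ₗ γ) = 0 := by
      refine LinearMap.ext fun e => ?_
      have h4 : G (ψ n (γ e)) = ψ (n+1) (α e) := by
        have h7 : G (γ e) = α e := LinearMap.congr_fun hγ e
        rw [← h7]
        exact (hchainv n (γ e)).symm
      have h5 : G (β e) = - ψ (n+1) (α e) := by
        have h6 := h2 e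
        rw [sub_eq_zero] at h6
        exact h6.symm
      show G (- β e - ψ n (γ e)) = (0 : J)
      rw [map_sub, map_neg, h4, h5]
      abel
    obtain ⟨δ, hδ⟩ := starJ E hE _ h3
    refine ⟨γ, δ, hγ, ?_⟩
    intro e
    have h8 : G (δ e) = - β e - ψ n (γ e) := LinearMap.congr_fun hδ e
    rw [h8]
    abel
  -- the twisted complex
  let χ : ℤ → (J × J →ₗ[R] J) := fun n =>
    if n = 0 then Snd else if n = -1 then (- (ψ (-1) ∘ₗ Fst) - G ∘ₗ Snd) else 0
  have hχ0 : ∀ v : J × J, χ 0 v = v.2 := by intro v; simp only [χ, if_pos rfl]; rfl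
  have hχm1 : ∀ v : J × J, χ (-1) v = - ψ (-1) v.1 - G v.2 := by
    intro v
    have : χ (-1) = (- (ψ (-1) ∘ₗ Fst) - G ∘ₗ Snd) := by
      simp only [χ, if_neg (by norm_num : (-1 : ℤ) ≠ 0), if_pos rfl, if_true]
    rw [this]
    rfl
  have hχother : ∀ n : ℤ, n ≠ 0 → n ≠ -1 → ∀ v, χ n v = 0 := by
    intro n h1 h2 v
    have : χ n = 0 := by simp only [χ, if_neg h1, if_neg h2]
    rw [this]
    rfl
  have hd : ∀ (n : ℤ) (v : J × J), χ n v = 0 → χ (n+1) (Cd n v) = 0 := by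
    intro n v hv
    rcases eq_or_ne n 0 with rfl | hn0
    · exact hχother 1 (by norm_num) (by norm_num) _
    rcases eq_or_ne n (-1) with rfl | hnm
    · rw [show ((-1 : ℤ) + 1) = 0 from by norm_num, hχ0]
      rw [hχm1] at hv
      exact hv
    rcases eq_or_ne n (-2) with rfl | hnm2
    · rw [show ((-2 : ℤ) + 1) = -1 from by norm_num, hχm1]
      show - ψ (-1) (G v.1) - G (- ψ (-2) v.1 - G v.2) = 0
      rw [map_sub, map_neg, hGG v.2]
      rw [show ((-1 : ℤ)) = -2 + 1 from by norm_num, hchainv (-2) v.1]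
      abel
    · exact hχother (n+1) (by omega) (by omega) _
  let Ifam : ℤ → Type u := fun n => ↥(LinearMap.ker (χ n))
  let dfam : ∀ n : ℤ, Ifam n →ₗ[R] Ifam (n+1) := fun n =>
    LinearMap.codRestrict (LinearMap.ker (χ (n+1))) ((Cd n) ∘ₗ (LinearMap.ker (χ n)).subtype)
      (fun v => LinearMap.mem_ker.mpr (hd n v.1 (LinearMap.mem_ker.mp v.2)))
  have hdfamv : ∀ (n : ℤ) (v : Ifam n), (dfam n v).1 = Cd n v.1 := fun n v => rfl

  -- injectivity of the terms
  have injJJ : Module.Injective R (J × J) := injective_prod R J J injJ injJ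
  have hσ : ∃ σ : J →ₗ[R] (J × J), ∀ v : J, χ (-1) (σ v) = v := by
    let xt : J →ₗ[R] J := - (KJ.subtype ∘ₗ wbar ∘ₗ
      (LinearMap.codRestrict KJ G (fun a => (hKJle (G a)).mpr (hGG a))))
    have hxtv : ∀ a : J, xt a = - (wbar ⟨G a, (hKJle (G a)).mpr (hGG a)⟩).1 := fun a => rfl
    have hGxt : G ∘ₗ xt = 0 := by
      refine LinearMap.ext fun a => ?_
      show G (xt a) = 0
      rw [hxtv a, map_neg, (hKJle _).mp (wbar ⟨G a, (hKJle (G a)).mpr (hGG a)⟩).2, neg_zero]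
    have hψ0xt : ∀ a, ψ 0 (xt a) = - G a := by
      intro a
      rw [hxtv a, map_neg, hψ0w (wbar ⟨G a, (hKJle (G a)).mpr (hGG a)⟩), hwwbar]
    have hcond2 : ∀ e : J, - ψ ((-1) + 1) ((xt : J →ₗ[R] J) e) - G ((LinearMap.id : J →ₗ[R] J) e) = 0 := by
      intro e
      rw [show ((-1 : ℤ) + 1) = 0 from by norm_num, hψ0xt e]
      simp
      rw [neg_neg, sub_self]
    obtain ⟨γ, δ, hγ, hδ⟩ := hChom J injJ (-1) xt LinearMap.id hGxt hcond2
    refine ⟨LinearMap.prod γ δ, ?_⟩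
    intro v
    rw [hχm1]
    exact hδ v
  have hinjfam : ∀ n : ℤ, Module.Injective R (Ifam n) := by
    intro n
    rcases eq_or_ne n 0 with rfl | hn0
    · refine injective_retract R injJJ _
        (LinearMap.codRestrict _ (LinearMap.prod Fst 0) ?_) ?_
      · intro v
        rw [LinearMap.mem_ker, hχ0]
        rfl
      · intro v
        refine Subtype.ext ?_
        have hv2 : v.1.2 = 0 := by
          have h9 := v.2
          rwa [LinearMap.mem_ker, hχ0] at h9
        show (v.1.1, (0 : J)) = v.1
        rw [← hv2]
    rcases eq_or_ne n (-1) with rfl | hnm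
    · obtain ⟨σ, hσ'⟩ := hσ
      refine injective_retract R injJJ _
        (LinearMap.codRestrict _ (LinearMap.id - σ ∘ₗ χ (-1)) ?_) ?_
      · intro v
        rw [LinearMap.mem_ker]
        show χ (-1) (v - σ (χ (-1) v)) = 0
        rw [map_sub, hσ' (χ (-1) v), sub_self]
      · intro v
        refine Subtype.ext ?_
        show v.1 - σ (χ (-1) v.1) = v.1
        rw [LinearMap.mem_ker.mp v.2, map_zero, sub_zero]
    · exact injective_retract R injJJ _
        (LinearMap.codRestrict _ LinearMap.id
          (fun v => LinearMap.mem_ker.mpr (hχother n hn0 hnm v)))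
        (fun v => Subtype.ext rfl)
  -- exactness of the complex
  have hexfam : ∀ n : ℤ, Function.Exact (dfam n) (dfam (n+1)) := by
    intro n v
    constructor
    · intro hv
      have hv1 : Cd (n+1) v.1 = 0 := congrArg Subtype.val hv
      have hx : G v.1.1 = 0 := congrArg Prod.fst hv1
      have ha : - ψ (n+1) v.1.1 - G v.1.2 = 0 := congrArg Prod.snd hv1
      rcases eq_or_ne n (-1) with rfl | hn1
      · have eχ : χ ((-1 : ℤ) + 1) = χ 0 := by norm_num
        have eψ : ψ ((-1 : ℤ) + 1) = ψ 0 := by norm_num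
        have hmem : v.1.2 = 0 := by
          have h9 : χ ((-1 : ℤ) + 1) v.1 = 0 := LinearMap.mem_ker.mp v.2
          have h10 : χ 0 v.1 = 0 := by rw [← eχ]; exact h9
          rw [hχ0 v.1] at h10
          exact h10
        have hψx : ψ 0 v.1.1 = 0 := by
          have h9 := ha
          rw [hmem, map_zero, sub_zero, neg_eq_zero, eψ] at h9
          exact h9
        obtain ⟨y, hy⟩ := hkerG_range v.1.1 hx
        have h3 : G (- ψ (-1) y) = 0 := by
          have h4 : G (ψ (-1) y) = ψ ((-1) + 1) (G y) := (hchainv (-1) y).symm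
          rw [map_neg, h4, hy, eψ, hψx, neg_zero]
        obtain ⟨b, hb⟩ := hkerG_range _ h3
        refine ⟨⟨(y, b), ?_⟩, ?_⟩
        · rw [LinearMap.mem_ker, hχm1]
          show - ψ (-1) y - G b = 0
          rw [hb]
          abel
        · refine Subtype.ext ?_
          show Cd (-1) (y, b) = v.1
          rw [hCdv]
          have h5 : - ψ (-1) y - G b = v.1.2 := by
            rw [hb, hmem]
            abel
          rw [hy, h5]
      rcases eq_or_ne n 0 with rfl | hn0
      · obtain ⟨y0, b0, hy0, hb0⟩ := hCex 0 v.1.1 v.1.2 hx ha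
        have htmem : G b0 ∈ KJ := (hKJle _).mpr (hGG b0)
        set ζ : J := (wbar ⟨G b0, htmem⟩).1 with hζ
        have hζG : G ζ = 0 := (hKJle _).mp (wbar ⟨G b0, htmem⟩).2
        have hζψ : ψ 0 ζ = G b0 := by
          rw [hζ, hψ0w (wbar ⟨G b0, htmem⟩), hwwbar]
        refine ⟨⟨(y0 + ζ, 0), ?_⟩, ?_⟩
        · rw [LinearMap.mem_ker, hχ0]
        · refine Subtype.ext ?_
          show Cd 0 (y0 + ζ, 0) = v.1
          rw [hCdv]
          have c1 : G (y0 + ζ) = v.1.1 := by rw [map_add, hζG, add_zero, hy0]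
          have c2 : - ψ 0 (y0 + ζ) - G (0 : J) = v.1.2 := by
            rw [map_add (ψ 0), hζψ, map_zero, sub_zero, ← hb0]
            abel
          rw [c1, c2]
      · obtain ⟨y, b, hy, hb⟩ := hCex n v.1.1 v.1.2 hx ha
        refine ⟨⟨(y, b), LinearMap.mem_ker.mpr (hχother n hn0 hn1 (y, b))⟩, ?_⟩
        refine Subtype.ext ?_
        show Cd n (y, b) = v.1
        rw [hCdv, hy, hb]
    · rintro ⟨u, rfl⟩
      refine Subtype.ext ?_
      show Cd (n+1) (Cd n u.1) = 0
      exact hCdCd n u.1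

  -- Hom-exactness of the complex
  have hhomfam : ∀ (E : Type u) (_ : AddCommGroup E) (_ : Module R E), Module.Injective R E →
      ∀ n : ℤ, Function.Exact (fun φ : E →ₗ[R] Ifam n => (dfam n).comp φ)
        (fun φ : E →ₗ[R] Ifam (n+1) => (dfam (n+1)).comp φ) := by
    intro E _ _ hE n h
    constructor
    · intro hh
      let α : E →ₗ[R] J := Fst ∘ₗ (LinearMap.ker (χ (n+1))).subtype ∘ₗ h
      let β : E →ₗ[R] J := Snd ∘ₗ (LinearMap.ker (χ (n+1))).subtype ∘ₗ h
      have hval : ∀ e, ((h e : Ifam (n+1)) : J × J) = (α e, β e) := fun e => rfl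
      have hCde : ∀ e, Cd (n+1) ((h e : Ifam (n+1)) : J × J) = 0 := by
        intro e
        have h9 := LinearMap.congr_fun hh e
        exact congrArg Subtype.val h9
      have hGα : G ∘ₗ α = 0 := LinearMap.ext fun e => congrArg Prod.fst (hCde e)
      have hψβ : ∀ e, - ψ (n+1) (α e) - G (β e) = 0 := fun e => congrArg Prod.snd (hCde e)
      rcases eq_or_ne n (-1) with rfl | hn1
      · have eχ : χ ((-1 : ℤ) + 1) = χ 0 := by norm_num
        have eψ : ψ ((-1 : ℤ) + 1) = ψ 0 := by norm_num
        have hβ0 : ∀ e, β e = 0 := by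
          intro e
          have h9 : χ ((-1 : ℤ) + 1) ((h e : Ifam ((-1) + 1)) : J × J) = 0 :=
            LinearMap.mem_ker.mp (h e).2
          have h10 : χ 0 ((h e : Ifam ((-1) + 1)) : J × J) = 0 := by rw [← eχ]; exact h9
          rw [hχ0] at h10
          exact h10
        have hψα : ∀ e, ψ 0 (α e) = 0 := by
          intro e
          have h9 := hψβ e
          rw [hβ0 e, map_zero, sub_zero, neg_eq_zero, eψ] at h9
          exact h9
        obtain ⟨γ, hγ⟩ := starJ E hE α hGα
        have h3 : G ∘ₗ (- (ψ (-1) ∘ₗ γ)) = 0 := by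
          refine LinearMap.ext fun e => ?_
          show G (- ψ (-1) (γ e)) = 0
          have h4 : G (ψ (-1) (γ e)) = ψ ((-1) + 1) (G (γ e)) := (hchainv (-1) (γ e)).symm
          have h7 : G (γ e) = α e := LinearMap.congr_fun hγ e
          rw [map_neg, h4, h7, eψ, hψα e, neg_zero]
        obtain ⟨δ, hδ⟩ := starJ E hE _ h3
        refine ⟨LinearMap.codRestrict _ (LinearMap.prod γ δ) ?_, ?_⟩
        · intro e
          rw [LinearMap.mem_ker, hχm1]
          show - ψ (-1) (γ e) - G (δ e) = 0
          have h8 : G (δ e) = - ψ (-1) (γ e) := LinearMap.congr_fun hδ e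
          rw [h8]
          abel
        · refine LinearMap.ext fun e => Subtype.ext ?_
          show Cd (-1) (γ e, δ e) = ((h e : Ifam ((-1) + 1)) : J × J)
          rw [hCdv, hval e]
          have c1 : G (γ e) = α e := LinearMap.congr_fun hγ e
          have h8 : G (δ e) = - ψ (-1) (γ e) := LinearMap.congr_fun hδ e
          have c2 : - ψ (-1) (γ e) - G (δ e) = β e := by
            rw [h8, hβ0 e]
            abel
          rw [c1, c2]
      rcases eq_or_ne n 0 with rfl | hn0
      · obtain ⟨γ0, δ0, hγ0, hδ0⟩ := hChom E hE 0 α β hGα hψβ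
        let tmap : E →ₗ[R] ↥KJ :=
          LinearMap.codRestrict KJ (G ∘ₗ δ0) (fun e => (hKJle _).mpr (hGG (δ0 e)))
        let ζmap : E →ₗ[R] J := KJ.subtype ∘ₗ wbar ∘ₗ tmap
        have hζG : ∀ e, G (ζmap e) = 0 := fun e => (hKJle _).mp (wbar (tmap e)).2
        have hζψ : ∀ e, ψ 0 (ζmap e) = G (δ0 e) := by
          intro e
          show ψ 0 ((wbar (tmap e) : ↥KJ) : J) = G (δ0 e)
          rw [hψ0w (wbar (tmap e)), hwwbar]
          rfl
        refine ⟨LinearMap.codRestrict _ (LinearMap.prod (γ0 + ζmap) 0) ?_, ?_⟩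
        · intro e
          rw [LinearMap.mem_ker, hχ0]
          rfl
        · refine LinearMap.ext fun e => Subtype.ext ?_
          show Cd 0 ((γ0 + ζmap) e, 0) = ((h e : Ifam (0 + 1)) : J × J)
          rw [hCdv, hval e]
          have c1 : G ((γ0 + ζmap) e) = α e := by
            show G (γ0 e + ζmap e) = α e
            rw [map_add, hζG e, add_zero]
            exact LinearMap.congr_fun hγ0 e
          have c2 : - ψ 0 ((γ0 + ζmap) e) - G (0 : J) = β e := by
            show - ψ 0 (γ0 e + ζmap e) - G (0 : J) = β e
            rw [map_add (ψ 0), hζψ e, map_zero, sub_zero, ← hδ0 e]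
            abel
          rw [c1, c2]
      · obtain ⟨γ, δ, hγ, hδ⟩ := hChom E hE n α β hGα hψβ
        refine ⟨LinearMap.codRestrict _ (LinearMap.prod γ δ)
          (fun e => LinearMap.mem_ker.mpr (hχother n hn0 hn1 _)), ?_⟩
        refine LinearMap.ext fun e => Subtype.ext ?_
        show Cd n (γ e, δ e) = ((h e : Ifam (n + 1)) : J × J)
        rw [hCdv, hval e]
        have c1 : G (γ e) = α e := LinearMap.congr_fun hγ e
        rw [c1, hδ e]
    · rintro ⟨k, rfl⟩
      refine LinearMap.ext fun e => Subtype.ext ?_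
      show Cd (n+1) (Cd n ((k e : Ifam n) : J × J)) = 0
      exact hCdCd n ((k e : Ifam n) : J × J)
  -- the kernel of dfam 0 is isomorphic to M
  have hΦ0mem0 : ∀ m : M, χ 0 (((μ m : ↥KJ) : J), (0 : J)) = 0 := by
    intro m
    rw [hχ0]
  let Φ0 : M →ₗ[R] Ifam 0 :=
    LinearMap.codRestrict (LinearMap.ker (χ 0)) (LinearMap.prod (KJ.subtype ∘ₗ μ) 0)
      (fun m => LinearMap.mem_ker.mpr (hΦ0mem0 m))
  have hΦ0cyc : ∀ m : M, Φ0 m ∈ LinearMap.ker (dfam 0) := by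
    intro m
    rw [LinearMap.mem_ker]
    refine Subtype.ext ?_
    show Cd 0 (((μ m : ↥KJ) : J), (0 : J)) = 0
    rw [hCdv]
    have c1 : G ((μ m : ↥KJ) : J) = 0 := (hKJle _).mp (μ m).2
    have c2 : - ψ 0 ((μ m : ↥KJ) : J) - G (0 : J) = 0 := by
      rw [map_zero, sub_zero, hψ0w (μ m), hwμ m, neg_eq_zero]
      rfl
    rw [c1, c2]
    rfl
  let Φ : M →ₗ[R] ↥(LinearMap.ker (dfam 0)) :=
    LinearMap.codRestrict (LinearMap.ker (dfam 0)) Φ0 hΦ0cyc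
  have hΦbij : Function.Bijective Φ := by
    constructor
    · intro m m' hmm
      have h1 : ((μ m : ↥KJ) : J) = ((μ m' : ↥KJ) : J) :=
        congrArg (fun z => ((z : ↥(LinearMap.ker (dfam 0))) : Ifam 0).1.1) hmm
      exact hμinj (Subtype.ext h1)
    · intro v
      have hmem : (v : Ifam 0).1.2 = 0 := by
        have h9 : χ 0 (v : Ifam 0).1 = 0 := LinearMap.mem_ker.mp (v : Ifam 0).2
        rw [hχ0] at h9
        exact h9
      have hcyc : Cd 0 (v : Ifam 0).1 = 0 :=
        congrArg Subtype.val (LinearMap.mem_ker.mp v.2)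
      have hx : G (v : Ifam 0).1.1 = 0 := congrArg Prod.fst hcyc
      have ha : - ψ 0 (v : Ifam 0).1.1 - G (v : Ifam 0).1.2 = 0 := congrArg Prod.snd hcyc
      have hψx : ψ 0 (v : Ifam 0).1.1 = 0 := by
        rw [hmem, map_zero, sub_zero, neg_eq_zero] at ha
        exact ha
      have hxK : (v : Ifam 0).1.1 ∈ KJ := (hKJle _).mpr hx
      have hwz : w ⟨(v : Ifam 0).1.1, hxK⟩ = 0 := by
        refine Subtype.ext ?_
        show ((w ⟨(v : Ifam 0).1.1, hxK⟩ : ↥KJ) : J) = 0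
        rw [← hψ0w ⟨(v : Ifam 0).1.1, hxK⟩]
        exact hψx
      obtain ⟨m, hm⟩ := hkerw ⟨(v : Ifam 0).1.1, hxK⟩ hwz
      refine ⟨m, ?_⟩
      refine Subtype.ext (Subtype.ext ?_)
      show (((μ m : ↥KJ) : J), (0 : J)) = (v : Ifam 0).1
      have h1 : ((μ m : ↥KJ) : J) = (v : Ifam 0).1.1 := congrArg Subtype.val hm
      rw [h1, ← hmem]
  have em : M ≃ₗ[R] ↥(LinearMap.ker (dfam 0)) := LinearEquiv.ofBijective Φ hΦbij
  exact ⟨Ifam, fun n => inferInstance, fun n => inferInstance, dfam, hinjfam, hexfam,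
    ⟨em⟩, hhomfam⟩

end Aux

/-- An `R`-module is Gorenstein injective if and only if it is a direct summand of a
strongly Gorenstein injective `R`-module. -/




theorem gorenstein_injective_iff_direct_summand (R : Type u) [Ring R]
    (M : Type u) [AddCommGroup M] [Module R M] :
    GorensteinInjective R M ↔
      ∃ (S : Type u) (_ : AddCommGroup S) (_ : Module R S),
        StronglyGorensteinInjective R S ∧
        ∃ (N : Type u) (_ : AddCommGroup N) (_ : Module R N),
          Nonempty (S ≃ₗ[R] M × N) := by
  constructor
  · intro hM
    exact forward R M hM
  · rintro ⟨S, _, _, hSGI, N, _, _, ⟨eS⟩⟩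
    obtain ⟨I, _, _, f, hinj, hex, ⟨eSk⟩, hhom⟩ := hSGI
    exact backward R M N I f hinj hex (eSk.symm.trans eS) hhom
end

section
/- The left weak Gorenstein global dimension of R is at most the weak global dimension of R, with equality if the weak global dimension of R is finite. -/
/-! Definitions for Gorenstein homological algebra over an arbitrary
associative ring `R` (left modules; right modules are `Rᵐᵒᵖ`-modules). -/

universe u

section Tensor

open TensorProduct

variable (R : Type u) [Ring R]

/-- The defining relations of the tensor product `N ⊗_R M` of a right `R`-module `N`
and a left `R`-module `M`, inside the tensor product of abelian groups `N ⊗[ℤ] M`. -/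
noncomputable def tensorRel (N : Type u) [AddCommGroup N] [Module Rᵐᵒᵖ N]
    (M : Type u) [AddCommGroup M] [Module R M] : AddSubgroup (N ⊗[ℤ] M) :=
  AddSubgroup.closure {x | ∃ (r : R) (n : N) (m : M),
    x = (MulOpposite.op r • n) ⊗ₜ[ℤ] m - n ⊗ₜ[ℤ] (r • m)}

/-- The tensor product `N ⊗_R M` (an abelian group) of a right `R`-module `N` and a
left `R`-module `M` over the (possibly noncommutative) ring `R`. -/
abbrev bTensor (N : Type u) [AddCommGroup N] [Module Rᵐᵒᵖ N]
    (M : Type u) [AddCommGroup M] [Module R M] : Type u :=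
  (N ⊗[ℤ] M) ⧸ tensorRel R N M

/-- The map `N ⊗_R M →+ N ⊗_R M'` induced by a map `f : M →ₗ[R] M'` of left modules. -/
noncomputable def tmapRight (N : Type u) [AddCommGroup N] [Module Rᵐᵒᵖ N]
    {M M' : Type u} [AddCommGroup M] [Module R M] [AddCommGroup M'] [Module R M']
    (f : M →ₗ[R] M') : bTensor R N M →+ bTensor R N M' :=
  QuotientAddGroup.map _ _ (LinearMap.lTensor N (f.restrictScalars ℤ)).toAddMonoidHom <| by
    rw [tensorRel, AddSubgroup.closure_le]
    rintro x ⟨r, n, m, rfl⟩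
    simp only [AddSubgroup.coe_comap, Set.mem_preimage, LinearMap.toAddMonoidHom_coe,
      map_sub, LinearMap.lTensor_tmul, SetLike.mem_coe]
    refine AddSubgroup.subset_closure ⟨r, n, f m, ?_⟩
    simp [LinearMap.map_smul]

/-- The map `N ⊗_R M →+ N' ⊗_R M` induced by a map `g : N →ₗ[Rᵐᵒᵖ] N'` of right modules. -/
noncomputable def tmapLeft {N N' : Type u} [AddCommGroup N] [Module Rᵐᵒᵖ N]
    [AddCommGroup N'] [Module Rᵐᵒᵖ N']
    (M : Type u) [AddCommGroup M] [Module R M]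
    (g : N →ₗ[Rᵐᵒᵖ] N') : bTensor R N M →+ bTensor R N' M :=
  QuotientAddGroup.map _ _ (LinearMap.rTensor M (g.restrictScalars ℤ)).toAddMonoidHom <| by
    rw [tensorRel, AddSubgroup.closure_le]
    rintro x ⟨r, n, m, rfl⟩
    simp only [AddSubgroup.coe_comap, Set.mem_preimage, LinearMap.toAddMonoidHom_coe,
      map_sub, LinearMap.rTensor_tmul, SetLike.mem_coe]
    refine AddSubgroup.subset_closure ⟨r, g n, m, ?_⟩
    simp [LinearMap.map_smul]

/-- A left `R`-module `M` is flat if `- ⊗_R M` preserves injectivity of maps of right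
`R`-modules. -/
def ModFlat (M : Type u) [AddCommGroup M] [Module R M] : Prop :=
  ∀ (N N' : Type u) (_ : AddCommGroup N) (_ : Module Rᵐᵒᵖ N)
    (_ : AddCommGroup N') (_ : Module Rᵐᵒᵖ N') (g : N →ₗ[Rᵐᵒᵖ] N'),
      Function.Injective g → Function.Injective (tmapLeft R M g)

/-- `M` is Gorenstein flat: it is the kernel of a map in a doubly infinite exact complex
of flat modules which stays exact under `E ⊗_R -` for every injective right `R`-module `E`. -/
def GorensteinFlat (M : Type u) [AddCommGroup M] [Module R M] : Prop :=
  ∃ (F : ℤ → Type u) (_ : ∀ i, AddCommGroup (F i)) (_ : ∀ i, Module R (F i))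
    (d : ∀ i, F i →ₗ[R] F (i + 1)),
      (∀ i, ModFlat R (F i)) ∧
      (∀ i, Function.Exact (d i) (d (i + 1))) ∧
      Nonempty (M ≃ₗ[R] LinearMap.ker (d 0)) ∧
      (∀ (E : Type u) (_ : AddCommGroup E) (_ : Module Rᵐᵒᵖ E), Module.Injective Rᵐᵒᵖ E →
        ∀ i, Function.Exact (tmapRight R E (d i)) (tmapRight R E (d (i + 1))))

/-- Flat dimension, valued in `ℕ∞`. -/
noncomputable def fDim (M : Type u) [AddCommGroup M] [Module R M] : ℕ∞ :=
  sInf ((↑) '' {n : ℕ | HasLeftResolutionLE R (fun N _ _ => ModFlat R N) M n})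

/-- Gorenstein flat dimension, valued in `ℕ∞`. -/
noncomputable def gfDim (M : Type u) [AddCommGroup M] [Module R M] : ℕ∞ :=
  sInf ((↑) '' {n : ℕ | HasLeftResolutionLE R (fun N _ _ => GorensteinFlat R N) M n})

/-- The weak global dimension of `R`. -/
noncomputable def wgldim : ℕ∞ :=
  sSup {d : ℕ∞ | ∃ (M : Type u) (_ : AddCommGroup M) (_ : Module R M), d = fDim R M}

/-- The left weak Gorenstein global dimension of `R`: `sup { Gfd_R(M) }`. -/
noncomputable def GFgldim : ℕ∞ :=
  sSup {d : ℕ∞ | ∃ (M : Type u) (_ : AddCommGroup M) (_ : Module R M), d = gfDim R M}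

end Tensor

/-! ### Auxiliary development -/

section Aux

open TensorProduct

variable {R : Type u} [Ring R]

section BT

variable (N : Type u) [AddCommGroup N] [Module Rᵐᵒᵖ N]
variable {M M' : Type u} [AddCommGroup M] [Module R M] [AddCommGroup M'] [Module R M']

lemma tmapRight_mk (f : M →ₗ[R] M') (x : N ⊗[ℤ] M) :
    tmapRight R N f (QuotientAddGroup.mk x) =
      QuotientAddGroup.mk (LinearMap.lTensor N (f.restrictScalars ℤ) x) := rfl

lemma tmapRight_zero_apply (x : bTensor R N M) :
    tmapRight R N (0 : M →ₗ[R] M') x = 0 := by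
  induction x using QuotientAddGroup.induction_on with
  | H x =>
    rw [tmapRight_mk]
    have h : (LinearMap.restrictScalars ℤ (0 : M →ₗ[R] M')) = 0 := rfl
    rw [h, LinearMap.lTensor_zero, LinearMap.zero_apply]
    rfl

lemma tmapRight_id_apply (x : bTensor R N M) :
    tmapRight R N (LinearMap.id : M →ₗ[R] M) x = x := by
  induction x using QuotientAddGroup.induction_on with
  | H x =>
    rw [tmapRight_mk]
    have h : (LinearMap.restrictScalars ℤ (LinearMap.id : M →ₗ[R] M)) = LinearMap.id := rfl
    rw [h, LinearMap.lTensor_id, LinearMap.id_apply]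

end BT

lemma int_odd_succ (i : ℤ) : Odd (i + 1) ↔ ¬ Odd i := by
  simp only [Int.odd_iff]
  omega

/-- A flat module is Gorenstein flat. -/
lemma GorensteinFlat.of_modFlat {M : Type u} [AddCommGroup M] [Module R M]
    (hM : ModFlat R M) : GorensteinFlat R M := by
  classical
  have hdo : ∀ i : ℤ, Odd i →
      ((fun i : ℤ => if Odd i then (LinearMap.id : M →ₗ[R] M) else 0) i) = LinearMap.id :=
    fun i h => if_pos h
  have hde : ∀ i : ℤ, ¬ Odd i →
      ((fun i : ℤ => if Odd i then (LinearMap.id : M →ₗ[R] M) else 0) i) = 0 :=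
    fun i h => if_neg h
  refine ⟨fun _ => M, fun _ => inferInstance, fun _ => inferInstance,
    fun i => if Odd i then (LinearMap.id : M →ₗ[R] M) else 0, fun _ => hM, ?_, ?_, ?_⟩
  · intro i y
    rcases Classical.em (Odd i) with ho | he
    · rw [hdo i ho, hde (i+1) (fun h => ((int_odd_succ i).mp h) ho)]
      simp
    · rw [hde i he, hdo (i+1) ((int_odd_succ i).mpr he)]
      simp only [LinearMap.id_apply, LinearMap.zero_apply, Set.mem_range]
      constructor
      · intro h; exact ⟨0, by simp [h]⟩
      · rintro ⟨x, rfl⟩; simp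
  · have h0 : ¬ Odd (0 : ℤ) := by decide
    rw [hde 0 h0]
    exact ⟨Submodule.topEquiv.symm.trans (LinearEquiv.ofEq _ _ LinearMap.ker_zero.symm)⟩
  · intro E _ _ _ i y
    rcases Classical.em (Odd i) with ho | he
    · rw [hdo i ho, hde (i+1) (fun h => ((int_odd_succ i).mp h) ho)]
      rw [tmapRight_zero_apply]
      simp only [Set.mem_range, eq_self_iff_true, true_iff]
      exact ⟨y, tmapRight_id_apply _ _⟩
    · rw [hde i he, hdo (i+1) ((int_odd_succ i).mpr he)]
      rw [tmapRight_id_apply]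
      constructor
      · intro h; exact ⟨y, by rw [tmapRight_zero_apply, h]⟩
      · rintro ⟨x, rfl⟩; rw [tmapRight_zero_apply]

end Aux
section Dim

variable {R : Type u} [Ring R]

lemma HasLeftResolutionLE.pad {𝒢 : ∀ (N : Type u) [AddCommGroup N] [Module R N], Prop}
    {M : Type u} [AddCommGroup M] [Module R M] {n m : ℕ} (hnm : n ≤ m)
    (hM : HasLeftResolutionLE R 𝒢 M n) : HasLeftResolutionLE R 𝒢 M m := by
  obtain ⟨G, iG, mG, d, π, h1, h2, h3, h4, h5⟩ := hM
  exact ⟨G, iG, mG, d, π, h1, fun i hi => h2 i (lt_of_le_of_lt hnm hi), h3, h4, h5⟩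

lemma gfDim_le_fDim (M : Type u) [AddCommGroup M] [Module R M] :
    gfDim R M ≤ fDim R M := by
  have h : ((↑) '' {n : ℕ | HasLeftResolutionLE R (fun N _ _ => ModFlat R N) M n} : Set ℕ∞) ⊆
      ((↑) '' {n : ℕ | HasLeftResolutionLE R (fun N _ _ => GorensteinFlat R N) M n}) := by
    rintro d ⟨n, hn, rfl⟩
    obtain ⟨G, iG, mG, d', π, h1, h2, h3, h4, h5⟩ := hn
    exact ⟨n, ⟨G, iG, mG, d', π, fun i => GorensteinFlat.of_modFlat (h1 i), h2, h3, h4, h5⟩, rfl⟩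
  exact sInf_le_sInf h

lemma fDim_le_wgldim (M : Type u) [AddCommGroup M] [Module R M] :
    fDim R M ≤ wgldim R :=
  le_sSup ⟨M, inferInstance, inferInstance, rfl⟩

lemma GFgldim_le : GFgldim (R := R) ≤ wgldim R := by
  refine sSup_le ?_
  rintro d ⟨M, iM, mM, rfl⟩
  exact le_trans (gfDim_le_fDim M) (fDim_le_wgldim M)

/-- Extract a small element from a bounded infimum. -/
lemma exists_resolution_of_dim_le {T : Set ℕ} {w : ℕ}
    (h : sInf ((↑) '' T : Set ℕ∞) ≤ (w : ℕ∞)) : ∃ n ∈ T, n ≤ w := by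
  by_contra hc
  push_neg at hc
  have h1 : (w : ℕ∞) + 1 ≤ sInf ((↑) '' T : Set ℕ∞) := by
    refine le_sInf ?_
    rintro d ⟨n, hn, rfl⟩
    exact_mod_cast hc n hn
  have h2 : (w : ℕ∞) + 1 ≤ (w : ℕ∞) := le_trans h1 h
  have h3 : (w : ℕ∞) < (w : ℕ∞) + 1 := by
    exact_mod_cast Nat.lt_succ_self w
  exact absurd (lt_of_lt_of_le h3 h2) (lt_irrefl _)

end Dim
section Char

open TensorProduct

variable {R : Type u} [Ring R]

namespace MyChar

/-- Right module structure on the character module of a left module. -/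
noncomputable instance chModule (M : Type u) [AddCommGroup M] [Module R M] :
    Module Rᵐᵒᵖ (CharacterModule M) where
  smul r c := AddMonoidHom.comp (c : M →+ AddCircle (1 : ℚ))
    (DistribMulAction.toAddMonoidHom M r.unop)
  one_smul c := DFunLike.ext _ _ fun m => by
    show c ((1 : R) • m) = c m
    rw [one_smul]
  mul_smul r s c := DFunLike.ext _ _ fun m => by
    show c ((r * s).unop • m) = c (s.unop • r.unop • m)
    rw [MulOpposite.unop_mul, mul_smul]
  smul_zero r := DFunLike.ext _ _ fun m => rfl
  smul_add r c c' := DFunLike.ext _ _ fun m => rfl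
  add_smul r s c := DFunLike.ext _ _ fun m => by
    show c ((r + s).unop • m) = c (r.unop • m) + c (s.unop • m)
    rw [MulOpposite.unop_add, add_smul, map_add]
  zero_smul c := DFunLike.ext _ _ fun m => by
    show c ((0 : R) • m) = 0
    rw [zero_smul, map_zero]

lemma smul_ch_apply {M : Type u} [AddCommGroup M] [Module R M]
    (r : Rᵐᵒᵖ) (c : CharacterModule M) (m : M) : (r • c) m = c (r.unop • m) := rfl

variable {M M' M'' : Type u} [AddCommGroup M] [Module R M] [AddCommGroup M'] [Module R M']
  [AddCommGroup M''] [Module R M'']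

/-- The dual of a linear map of left modules, as a map of right modules. -/
noncomputable def chDual (f : M →ₗ[R] M') :
    CharacterModule M' →ₗ[Rᵐᵒᵖ] CharacterModule M where
  toFun c := AddMonoidHom.comp (c : M' →+ AddCircle (1 : ℚ)) f.toAddMonoidHom
  map_add' c c' := DFunLike.ext _ _ fun m => rfl
  map_smul' r c := DFunLike.ext _ _ fun m => by
    show c (r.unop • f m) = c (f (r.unop • m))
    rw [f.map_smul]

lemma chDual_apply (f : M →ₗ[R] M') (c : CharacterModule M') (m : M) :
    chDual f c m = c (f m) := rfl

lemma chDual_injective {f : M →ₗ[R] M'} (hf : Function.Surjective f) :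
    Function.Injective (chDual f) := by
  intro c c' h
  refine DFunLike.ext _ _ fun m' => ?_
  obtain ⟨m, rfl⟩ := hf m'
  exact DFunLike.congr_fun h m

lemma chDual_surjective {f : M →ₗ[R] M'} (hf : Function.Injective f) :
    Function.Surjective (chDual f) := by
  intro c
  obtain ⟨c', hc'⟩ := CharacterModule.dual_surjective_of_injective
    (f.toAddMonoidHom.toIntLinearMap) hf c
  exact ⟨c', hc'⟩

lemma chDual_exact {f : M →ₗ[R] M'} {g : M' →ₗ[R] M''} (h : Function.Exact f g) :
    Function.Exact (chDual g) (chDual f) := by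
  intro c
  constructor
  · intro hc
    -- `c` vanishes on `ker g' = range f`
    set g' : M' →ₗ[ℤ] M'' := g.toAddMonoidHom.toIntLinearMap with hg'
    have hker : ∀ x ∈ LinearMap.ker g', (c.toIntLinearMap : M' →ₗ[ℤ] AddCircle (1:ℚ)) x = 0 := by
      intro x hx
      have hx' : g x = 0 := hx
      obtain ⟨y, rfl⟩ := (h x).mp hx'
      exact DFunLike.congr_fun hc y
    set cbar : (M' ⧸ LinearMap.ker g') →ₗ[ℤ] AddCircle (1:ℚ) :=
      Submodule.liftQ (LinearMap.ker g') c.toIntLinearMap hker with hcbar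
    set e := LinearMap.quotKerEquivRange g' with he
    set ψ : (LinearMap.range g') →ₗ[ℤ] AddCircle (1:ℚ) := cbar ∘ₗ (e.symm : _ →ₗ[ℤ] _) with hψ
    obtain ⟨χ, hχ⟩ := CharacterModule.dual_surjective_of_injective
      ((LinearMap.range g').subtype) (Submodule.injective_subtype _) ψ.toAddMonoidHom
    refine ⟨χ, DFunLike.ext _ _ fun x => ?_⟩
    have h1 : χ (g x) = ψ ⟨g' x, LinearMap.mem_range_self g' x⟩ :=
      DFunLike.congr_fun hχ ⟨g' x, LinearMap.mem_range_self g' x⟩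
    have h2 : e.symm ⟨g' x, LinearMap.mem_range_self g' x⟩ = Submodule.Quotient.mk x := by
      rw [LinearEquiv.symm_apply_eq]
      rfl
    show χ (g x) = c x
    rw [h1, hψ]
    show cbar (e.symm ⟨g' x, _⟩) = c x
    rw [h2]
    rfl
  · rintro ⟨c', rfl⟩
    refine DFunLike.ext _ _ fun m => ?_
    show c' (g (f m)) = 0
    rw [h.apply_apply_eq_zero, map_zero]

/-- The dual equivalence induced by an equivalence. -/
noncomputable def chCongr (e : M ≃ₗ[R] M') :
    CharacterModule M' ≃ₗ[Rᵐᵒᵖ] CharacterModule M :=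
  LinearEquiv.ofLinear (chDual (e : M →ₗ[R] M')) (chDual (e.symm : M' →ₗ[R] M))
    (LinearMap.ext fun c => DFunLike.ext _ _ fun m => by
      show c (e.symm (e m)) = c m
      rw [LinearEquiv.symm_apply_apply])
    (LinearMap.ext fun c => DFunLike.ext _ _ fun m => by
      show c (e (e.symm m)) = c m
      rw [LinearEquiv.apply_symm_apply])

end MyChar

end Char
section Adj

open TensorProduct MyChar

variable {R : Type u} [Ring R]

/-- Injectivity property for modules over an arbitrary ring, with explicit instances. -/
def MyInj (S : Type u) [Ring S] (Q : Type u) [AddCommGroup Q] [Module S Q] : Prop :=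
  ∀ (N N' : Type u) (iN : AddCommGroup N) (mN : Module S N) (iN' : AddCommGroup N')
    (mN' : Module S N') (i : N →ₗ[S] N'), Function.Injective i →
    ∀ f : N →ₗ[S] Q, ∃ g : N' →ₗ[S] Q, g.comp i = f

namespace MyChar

variable {N N' : Type u} [AddCommGroup N] [Module Rᵐᵒᵖ N] [AddCommGroup N'] [Module Rᵐᵒᵖ N']
variable {M : Type u} [AddCommGroup M] [Module R M]

lemma tmapLeft_mk (g : N →ₗ[Rᵐᵒᵖ] N') (x : N ⊗[ℤ] M) :
    tmapLeft R M g (QuotientAddGroup.mk x) =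
      QuotientAddGroup.mk (LinearMap.rTensor M (g.restrictScalars ℤ) x) := rfl

lemma btensor_mk_add (x y : N ⊗[ℤ] M) :
    (QuotientAddGroup.mk (x + y) : bTensor R N M) =
      QuotientAddGroup.mk x + QuotientAddGroup.mk y := rfl

/-- Extensionality for additive maps out of `bTensor`. -/
lemma btensor_hom_ext {T : Type*} [AddCommGroup T] {φ ψ : bTensor R N M →+ T}
    (h : ∀ (n : N) (m : M), φ (QuotientAddGroup.mk (n ⊗ₜ[ℤ] m)) =
      ψ (QuotientAddGroup.mk (n ⊗ₜ[ℤ] m))) : ∀ x, φ x = ψ x := by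
  intro x
  induction x using QuotientAddGroup.induction_on with
  | H x =>
    induction x with
    | zero =>
      show φ (QuotientAddGroup.mk 0) = ψ (QuotientAddGroup.mk 0)
      rw [QuotientAddGroup.mk_zero, map_zero, map_zero]
    | tmul n m => exact h n m
    | add a b ha hb =>
      rw [btensor_mk_add (R := R), map_add, map_add, ha, hb]

/-- A linear map into the character module gives a character of the tensor product. -/
noncomputable def toChar (f : N →ₗ[Rᵐᵒᵖ] CharacterModule M) :
    CharacterModule (bTensor R N M) := by
  refine QuotientAddGroup.lift (tensorRel R N M)
    (TensorProduct.liftAddHom (R := ℤ)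
      { toFun := fun n => (f n : M →+ AddCircle (1:ℚ))
        map_zero' := by show (f 0 : M →+ AddCircle (1:ℚ)) = 0; rw [map_zero]
        map_add' := fun a b => by
          show (f (a + b) : M →+ AddCircle (1:ℚ)) = _
          rw [map_add]; rfl }
      (fun z n m => ?_)) ?_
  · show (f (z • n) : M →+ AddCircle (1:ℚ)) m = f n (z • m)
    rw [map_zsmul]
    show z • ((f n : M →+ AddCircle (1:ℚ)) m) = f n (z • m)
    exact (map_zsmul (f n) z m).symm
  · intro x hx
    rw [tensorRel] at hx
    have hle : AddSubgroup.closure {x : N ⊗[ℤ] M | ∃ (r : R) (n : N) (m : M),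
        x = (MulOpposite.op r • n) ⊗ₜ[ℤ] m - n ⊗ₜ[ℤ] (r • m)} ≤
        (TensorProduct.liftAddHom (R := ℤ)
          { toFun := fun n => (f n : M →+ AddCircle (1:ℚ))
            map_zero' := by show (f 0 : M →+ AddCircle (1:ℚ)) = 0; rw [map_zero]
            map_add' := fun a b => by
              show (f (a + b) : M →+ AddCircle (1:ℚ)) = _
              rw [map_add]; rfl }
          (fun z n m => by
            show (f (z • n) : M →+ AddCircle (1:ℚ)) m = f n (z • m)
            rw [map_zsmul]
            show z • ((f n : M →+ AddCircle (1:ℚ)) m) = f n (z • m)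
            exact (map_zsmul (f n) z m).symm)).ker := by
      rw [AddSubgroup.closure_le]
      rintro y ⟨r, n, m, rfl⟩
      rw [SetLike.mem_coe, AddMonoidHom.mem_ker, map_sub, TensorProduct.liftAddHom_tmul,
        TensorProduct.liftAddHom_tmul]
      show (f (MulOpposite.op r • n) : M →+ AddCircle (1:ℚ)) m - f n (r • m) = 0
      rw [map_smul]
      show (MulOpposite.op r • f n) m - f n (r • m) = 0
      rw [smul_ch_apply, MulOpposite.unop_op, sub_self]
    exact hle hx

lemma toChar_mk_tmul (f : N →ₗ[Rᵐᵒᵖ] CharacterModule M) (n : N) (m : M) :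
    toChar f (QuotientAddGroup.mk (n ⊗ₜ[ℤ] m)) = f n m := rfl

/-- A character of the tensor product gives a linear map into the character module. -/
noncomputable def ofChar (χ : CharacterModule (bTensor R N M)) :
    N →ₗ[Rᵐᵒᵖ] CharacterModule M where
  toFun n :=
    { toFun := fun m => χ (QuotientAddGroup.mk (n ⊗ₜ[ℤ] m))
      map_zero' := by
        show χ (QuotientAddGroup.mk (n ⊗ₜ[ℤ] (0 : M))) = 0
        rw [tmul_zero, QuotientAddGroup.mk_zero, map_zero]
      map_add' := fun a b => by
        show χ (QuotientAddGroup.mk (n ⊗ₜ[ℤ] (a + b))) = _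
        rw [tmul_add, btensor_mk_add (R := R), map_add] }
  map_add' a b := DFunLike.ext _ _ fun m => by
    show χ (QuotientAddGroup.mk ((a + b) ⊗ₜ[ℤ] m)) = _
    rw [add_tmul, btensor_mk_add (R := R), map_add]
    rfl
  map_smul' r n := DFunLike.ext _ _ fun m => by
    show χ (QuotientAddGroup.mk ((r • n) ⊗ₜ[ℤ] m)) =
      χ (QuotientAddGroup.mk (n ⊗ₜ[ℤ] (r.unop • m)))
    congr 1
    rw [QuotientAddGroup.eq]
    have hmem : ((MulOpposite.op r.unop • n) ⊗ₜ[ℤ] m - n ⊗ₜ[ℤ] (r.unop • m)) ∈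
        tensorRel R N M := AddSubgroup.subset_closure ⟨r.unop, n, m, rfl⟩
    rw [MulOpposite.op_unop] at hmem
    have h2 := (tensorRel R N M).neg_mem hmem
    rw [neg_sub] at h2
    rwa [neg_add_eq_sub]

lemma ofChar_apply (χ : CharacterModule (bTensor R N M)) (n : N) (m : M) :
    ofChar χ n m = χ (QuotientAddGroup.mk (n ⊗ₜ[ℤ] m)) := rfl

/-- A module with injective character module is flat. -/
lemma modFlat_of_myInj_ch (h : MyInj Rᵐᵒᵖ (CharacterModule M)) : ModFlat R M := by
  intro N N' iN mN iN' mN' g hg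
  rw [injective_iff_map_eq_zero]
  intro x hx
  by_contra hne
  obtain ⟨χ, hχ⟩ := CharacterModule.exists_character_apply_ne_zero_of_ne_zero hne
  obtain ⟨f', hf'⟩ := h N N' iN mN iN' mN' g hg (ofChar χ)
  have key : ∀ y, toChar f' (tmapLeft R M g y) = χ y := by
    refine btensor_hom_ext (φ := (toChar f').comp (tmapLeft R M g)) (ψ := χ) ?_
    intro n m
    show toChar f' (tmapLeft R M g (QuotientAddGroup.mk (n ⊗ₜ[ℤ] m))) = _
    rw [tmapLeft_mk, LinearMap.rTensor_tmul, toChar_mk_tmul]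
    show f' (g n) m = χ (QuotientAddGroup.mk (n ⊗ₜ[ℤ] m))
    have : f' (g n) = ofChar χ n := DFunLike.congr_fun hf' n
    rw [this, ofChar_apply]
  have : χ x = 0 := by rw [← key x, hx, map_zero]
  exact hχ this

/-- The character module of a flat module is injective. -/
lemma myInj_ch_of_modFlat (h : ModFlat R M) : MyInj Rᵐᵒᵖ (CharacterModule M) := by
  intro N N' iN mN iN' mN' i hi f
  have hinj : Function.Injective (tmapLeft R M i) := h N N' iN mN iN' mN' i hi
  obtain ⟨χ', hχ'⟩ := CharacterModule.dual_surjective_of_injective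
    ((tmapLeft R M i).toIntLinearMap) hinj (toChar f)
  refine ⟨ofChar χ', ?_⟩
  refine LinearMap.ext fun n => DFunLike.ext _ _ fun m => ?_
  have h2 : tmapLeft R M i (QuotientAddGroup.mk (n ⊗ₜ[ℤ] m)) =
      QuotientAddGroup.mk ((i n) ⊗ₜ[ℤ] m) := by
    rw [tmapLeft_mk, LinearMap.rTensor_tmul]
    rfl
  show χ' (QuotientAddGroup.mk ((i n) ⊗ₜ[ℤ] m)) = f n m
  rw [← h2]
  exact (DFunLike.congr_fun hχ' (QuotientAddGroup.mk (n ⊗ₜ[ℤ] m))).trans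
    (toChar_mk_tmul f n m)

end MyChar

end Adj
section InjSide

variable {S : Type u} [Ring S]

namespace MyInj

lemma of_subsingleton (Q : Type u) [AddCommGroup Q] [Module S Q] [Subsingleton Q] :
    MyInj S Q := by
  intro N N' iN mN iN' mN' i hi f
  exact ⟨0, LinearMap.ext fun n => Subsingleton.elim _ _⟩

lemma congr {Q Q' : Type u} [AddCommGroup Q] [Module S Q] [AddCommGroup Q'] [Module S Q']
    (h : MyInj S Q) (e : Q ≃ₗ[S] Q') : MyInj S Q' := by
  intro N N' iN mN iN' mN' i hi f
  obtain ⟨g, hg⟩ := h N N' iN mN iN' mN' i hi ((e.symm : Q' →ₗ[S] Q).comp f)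
  refine ⟨(e : Q →ₗ[S] Q').comp g, LinearMap.ext fun n => ?_⟩
  have h1 : g (i n) = e.symm (f n) := DFunLike.congr_fun hg n
  show e (g (i n)) = f n
  rw [h1, LinearEquiv.apply_symm_apply]

lemma prod {Q Q' : Type u} [AddCommGroup Q] [Module S Q] [AddCommGroup Q'] [Module S Q']
    (hQ : MyInj S Q) (hQ' : MyInj S Q') : MyInj S (Q × Q') := by
  intro N N' iN mN iN' mN' i hi f
  obtain ⟨g1, hg1⟩ := hQ N N' iN mN iN' mN' i hi ((LinearMap.fst S Q Q').comp f)
  obtain ⟨g2, hg2⟩ := hQ' N N' iN mN iN' mN' i hi ((LinearMap.snd S Q Q').comp f)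
  refine ⟨g1.prod g2, LinearMap.ext fun n => ?_⟩
  have h1 : g1 (i n) = (f n).1 := DFunLike.congr_fun hg1 n
  have h2 : g2 (i n) = (f n).2 := DFunLike.congr_fun hg2 n
  show (g1 (i n), g2 (i n)) = f n
  rw [h1, h2]

lemma of_retract {P Q : Type u} [AddCommGroup P] [Module S P] [AddCommGroup Q] [Module S Q]
    (hQ : MyInj S Q) (i : P →ₗ[S] Q) (r : Q →ₗ[S] P) (hri : r.comp i = LinearMap.id) :
    MyInj S P := by
  intro N N' iN mN iN' mN' j hj f
  obtain ⟨g, hg⟩ := hQ N N' iN mN iN' mN' j hj (i.comp f)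
  refine ⟨r.comp g, LinearMap.ext fun n => ?_⟩
  have h1 : g (j n) = i (f n) := DFunLike.congr_fun hg n
  show r (g (j n)) = f n
  rw [h1]
  exact DFunLike.congr_fun hri (f n)

end MyInj

/-- A split SES from a retraction. -/
lemma split_of_retraction {A B C : Type u} [AddCommGroup A] [Module S A] [AddCommGroup B]
    [Module S B] [AddCommGroup C] [Module S C] {f : A →ₗ[S] B} {g : B →ₗ[S] C}
    (hfg : Function.Exact f g) (hg : Function.Surjective g) (r : B →ₗ[S] A)
    (hr : r.comp f = LinearMap.id) : Nonempty (B ≃ₗ[S] A × C) :=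
  ⟨(hfg.splitInjectiveEquiv hg ⟨r, hr⟩).1⟩

/-- `Q` has a coresolution of length `≤ n` by `MyInj` modules. -/
def CoresLE : ℕ → (Q : Type u) → [AddCommGroup Q] → [Module S Q] → Prop
  | 0, Q, _, _ => MyInj S Q
  | (n+1), Q, _, _ => ∃ (E C : Type u) (_ : AddCommGroup E) (_ : Module S E)
      (_ : AddCommGroup C) (_ : Module S C) (f : Q →ₗ[S] E) (g : E →ₗ[S] C),
      MyInj S E ∧ Function.Injective f ∧ Function.Exact f g ∧ Function.Surjective g ∧
      CoresLE n C

/-- `D` is an `n`-th cosyzygy of `Q` (up to injective direct summands). -/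
def Cosyz : ℕ → (Q : Type u) → [AddCommGroup Q] → [Module S Q] →
    (D : Type u) → [AddCommGroup D] → [Module S D] → Prop
  | 0, Q, _, _, D, _, _ => ∃ (E : Type u) (_ : AddCommGroup E) (_ : Module S E),
      MyInj S E ∧ Nonempty (Q ≃ₗ[S] D × E)
  | (n+1), Q, _, _, D, _, _ => ∃ (E C : Type u) (_ : AddCommGroup E) (_ : Module S E)
      (_ : AddCommGroup C) (_ : Module S C) (f : Q →ₗ[S] E) (g : E →ₗ[S] C),
      MyInj S E ∧ Function.Injective f ∧ Function.Exact f g ∧ Function.Surjective g ∧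
      Cosyz n C D

lemma CoresLE.congr : ∀ (n : ℕ) (Q Q' : Type u) (iQ : AddCommGroup Q) (mQ : Module S Q)
    (iQ' : AddCommGroup Q') (mQ' : Module S Q'), CoresLE (S := S) n Q → (Q ≃ₗ[S] Q') →
    CoresLE (S := S) n Q'
  | 0, Q, Q', iQ, mQ, iQ', mQ', h, e => MyInj.congr h e
  | (n+1), Q, Q', iQ, mQ, iQ', mQ', h, e => by
    obtain ⟨E, C, iE, mE, iC, mC, f, g, hE, hf, hfg, hg, hC⟩ := h
    refine ⟨E, C, iE, mE, iC, mC, f.comp (e.symm : Q' →ₗ[S] Q), g, hE,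
      hf.comp e.symm.injective, ?_, hg, hC⟩
    intro x
    rw [hfg x]
    constructor
    · rintro ⟨q, rfl⟩; exact ⟨e q, by rw [LinearMap.comp_apply, LinearEquiv.coe_coe,
        LinearEquiv.symm_apply_apply]⟩
    · rintro ⟨q', rfl⟩; exact ⟨e.symm q', rfl⟩

lemma CoresLE.prodInj : ∀ (n : ℕ) (Q E0 : Type u) (iQ : AddCommGroup Q) (mQ : Module S Q)
    (iE0 : AddCommGroup E0) (mE0 : Module S E0), CoresLE (S := S) n Q → MyInj S E0 →
    CoresLE (S := S) n (Q × E0)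
  | 0, Q, E0, iQ, mQ, iE0, mE0, h, hE0 => MyInj.prod h hE0
  | (n+1), Q, E0, iQ, mQ, iE0, mE0, h, hE0 => by
    obtain ⟨E, C, iE, mE, iC, mC, f, g, hE, hf, hfg, hg, hC⟩ := h
    refine ⟨E × E0, C, inferInstance, inferInstance, iC, mC,
      LinearMap.prodMap f LinearMap.id, g.comp (LinearMap.fst S E E0), MyInj.prod hE hE0,
      ?_, ?_, fun c => by obtain ⟨e, he⟩ := hg c; exact ⟨(e, 0), he⟩, hC⟩
    · intro a b hab
      have h1 : f a.1 = f b.1 := congrArg Prod.fst hab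
      have h2 : a.2 = b.2 := by
        have := congrArg Prod.snd hab
        simpa using this
      exact Prod.ext (hf h1) h2
    · intro x
      constructor
      · intro hx
        obtain ⟨q, hq⟩ := (hfg x.1).mp hx
        exact ⟨(q, x.2), Prod.ext hq rfl⟩
      · rintro ⟨⟨q, e0⟩, rfl⟩
        exact hfg.apply_apply_eq_zero q

lemma Cosyz.prodInj : ∀ (n : ℕ) (Q E0 D : Type u) (iQ : AddCommGroup Q) (mQ : Module S Q)
    (iE0 : AddCommGroup E0) (mE0 : Module S E0) (iD : AddCommGroup D) (mD : Module S D),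
    Cosyz (S := S) n Q D → MyInj S E0 → Cosyz (S := S) n (Q × E0) D
  | 0, Q, E0, D, iQ, mQ, iE0, mE0, iD, mD, h, hE0 => by
    obtain ⟨E, iE, mE, hE, ⟨e⟩⟩ := h
    exact ⟨E × E0, inferInstance, inferInstance, MyInj.prod hE hE0,
      ⟨(e.prodCongr (LinearEquiv.refl S E0)).trans (LinearEquiv.prodAssoc S D E E0)⟩⟩
  | (n+1), Q, E0, D, iQ, mQ, iE0, mE0, iD, mD, h, hE0 => by
    obtain ⟨E, C, iE, mE, iC, mC, f, g, hE, hf, hfg, hg, hC⟩ := h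
    refine ⟨E × E0, C, inferInstance, inferInstance, iC, mC,
      LinearMap.prodMap f LinearMap.id, g.comp (LinearMap.fst S E E0), MyInj.prod hE hE0,
      ?_, ?_, fun c => by obtain ⟨e, he⟩ := hg c; exact ⟨(e, 0), he⟩, hC⟩
    · intro a b hab
      have h1 : f a.1 = f b.1 := congrArg Prod.fst hab
      have h2 : a.2 = b.2 := by
        have := congrArg Prod.snd hab
        simpa using this
      exact Prod.ext (hf h1) h2
    · intro x
      constructor
      · intro hx
        obtain ⟨q, hq⟩ := (hfg x.1).mp hx
        exact ⟨(q, x.2), Prod.ext hq rfl⟩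
      · rintro ⟨⟨q, e0⟩, rfl⟩
        exact hfg.apply_apply_eq_zero q

end InjSide
section Schanuel

variable {S : Type u} [Ring S]

/-- Schanuel lemma for injectives. -/
lemma injective_schanuel {Q E E' C C' : Type u}
    [AddCommGroup Q] [Module S Q] [AddCommGroup E] [Module S E] [AddCommGroup E'] [Module S E']
    [AddCommGroup C] [Module S C] [AddCommGroup C'] [Module S C']
    {f : Q →ₗ[S] E} {g : E →ₗ[S] C} {f' : Q →ₗ[S] E'} {g' : E' →ₗ[S] C'}
    (hE : MyInj S E) (hf : Function.Injective f) (hfg : Function.Exact f g)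
    (hg : Function.Surjective g)
    (hE' : MyInj S E') (hf' : Function.Injective f') (hfg' : Function.Exact f' g')
    (hg' : Function.Surjective g') :
    Nonempty ((C × E') ≃ₗ[S] C' × E) := by
  classical
  set T : Submodule S (E × E') := LinearMap.range (f.prod (-f')) with hT
  set inl : E →ₗ[S] ((E × E') ⧸ T) := T.mkQ.comp (LinearMap.inl S E E') with hinl
  set inr : E' →ₗ[S] ((E × E') ⧸ T) := T.mkQ.comp (LinearMap.inr S E E') with hinr
  have hTker : ∀ x ∈ T, (g'.comp (LinearMap.snd S E E')) x = 0 := by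
    rintro x ⟨q, rfl⟩
    show g' ((f.prod (-f')) q).2 = 0
    show g' (-(f' q)) = 0
    rw [map_neg, hfg'.apply_apply_eq_zero, neg_zero]
  have hTker2 : ∀ x ∈ T, (g.comp (LinearMap.fst S E E')) x = 0 := by
    rintro x ⟨q, rfl⟩
    show g (f q) = 0
    exact hfg.apply_apply_eq_zero q
  set pC' : ((E × E') ⧸ T) →ₗ[S] C' := T.liftQ (g'.comp (LinearMap.snd S E E')) hTker with hpC'
  set pC : ((E × E') ⧸ T) →ₗ[S] C := T.liftQ (g.comp (LinearMap.fst S E E')) hTker2 with hpC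
  have hinl_inj : Function.Injective inl := by
    rw [injective_iff_map_eq_zero]
    intro e he
    have h1 : ((e, 0) : E × E') ∈ T := (Submodule.Quotient.mk_eq_zero T).mp he
    obtain ⟨q, hq⟩ := h1
    have h2 : f' q = 0 := by
      have h2' := congrArg Prod.snd hq
      simpa using h2'
    have h3 : q = 0 := hf' (by rw [h2, map_zero])
    have h4 : f q = e := congrArg Prod.fst hq
    rw [← h4, h3, map_zero]
  have hinr_inj : Function.Injective inr := by
    rw [injective_iff_map_eq_zero]
    intro e he
    have h1 : ((0, e) : E × E') ∈ T := (Submodule.Quotient.mk_eq_zero T).mp he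
    obtain ⟨q, hq⟩ := h1
    have h2 : f q = (0 : E) := congrArg Prod.fst hq
    have h3 : q = 0 := hf (by rw [h2, map_zero])
    have h4 : -(f' q) = e := congrArg Prod.snd hq
    rw [← h4, h3, map_zero, neg_zero]
  have hex1 : Function.Exact inl pC' := by
    intro p
    obtain ⟨x, rfl⟩ := Submodule.Quotient.mk_surjective T p
    constructor
    · intro hx
      have hx' : g' x.2 = 0 := hx
      obtain ⟨q, hq⟩ := (hfg' x.2).mp hx'
      refine ⟨x.1 + f q, ?_⟩
      show Submodule.Quotient.mk ((x.1 + f q, 0) : E × E') = Submodule.Quotient.mk x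
      rw [Submodule.Quotient.eq]
      refine ⟨q, Prod.ext ?_ ?_⟩
      · show f q = x.1 + f q - x.1
        abel
      · show -(f' q) = 0 - x.2
        rw [hq, zero_sub]
    · rintro ⟨e, he⟩
      rw [← he]
      show g' (((e, (0 : E')) : E × E').2) = 0
      exact map_zero g'
  have hex2 : Function.Exact inr pC := by
    intro p
    obtain ⟨x, rfl⟩ := Submodule.Quotient.mk_surjective T p
    constructor
    · intro hx
      have hx' : g x.1 = 0 := hx
      obtain ⟨q, hq⟩ := (hfg x.1).mp hx'
      refine ⟨x.2 + f' q, ?_⟩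
      show Submodule.Quotient.mk ((0, x.2 + f' q) : E × E') = Submodule.Quotient.mk x
      rw [Submodule.Quotient.eq]
      refine ⟨-q, Prod.ext ?_ ?_⟩
      · show f (-q) = 0 - x.1
        rw [map_neg, hq, zero_sub]
      · show -(f' (-q)) = x.2 + f' q - x.2
        rw [map_neg, neg_neg]
        abel
    · rintro ⟨e, he⟩
      rw [← he]
      show g (((0 : E), e) : E × E').1 = 0
      exact map_zero g
  have hsurj1 : Function.Surjective pC' := by
    intro c'
    obtain ⟨e', he'⟩ := hg' c'
    exact ⟨Submodule.Quotient.mk ((0, e') : E × E'), he'⟩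
  have hsurj2 : Function.Surjective pC := by
    intro c
    obtain ⟨e, he⟩ := hg c
    exact ⟨Submodule.Quotient.mk ((e, 0) : E × E'), he⟩
  obtain ⟨r, hr⟩ := hE E ((E × E') ⧸ T) inferInstance inferInstance inferInstance inferInstance
    inl hinl_inj LinearMap.id
  obtain ⟨r', hr'⟩ := hE' E' ((E × E') ⧸ T) inferInstance inferInstance inferInstance inferInstance
    inr hinr_inj LinearMap.id
  obtain ⟨e1⟩ := split_of_retraction hex1 hsurj1 r hr
  obtain ⟨e2⟩ := split_of_retraction hex2 hsurj2 r' hr'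
  refine ⟨?_⟩
  exact (LinearEquiv.prodComm S C E').trans ((LinearEquiv.symm e2).trans (e1.trans
    (LinearEquiv.prodComm S E C')))

/-- Trivial cosyzygy at length zero. -/
lemma cosyz_refl (Q : Type u) [AddCommGroup Q] [Module S Q] : Cosyz (S := S) 0 Q Q := by
  refine ⟨PUnit, inferInstance, inferInstance, MyInj.of_subsingleton _, ⟨?_⟩⟩
  refine LinearEquiv.ofLinear (LinearMap.prod LinearMap.id 0) (LinearMap.fst S Q PUnit.{u+1}) ?_ ?_
  · refine LinearMap.ext fun x => Prod.ext rfl (Subsingleton.elim _ _)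
  · rfl

/-- The main induction: an `n`-th cosyzygy of a module with a `MyInj`-coresolution
of length `≤ n` is itself `MyInj`. -/
lemma main_inj : ∀ (n : ℕ) (Q D : Type u) (iQ : AddCommGroup Q) (mQ : Module S Q)
    (iD : AddCommGroup D) (mD : Module S D),
    CoresLE (S := S) n Q → Cosyz (S := S) n Q D → MyInj S D
  | 0, Q, D, iQ, mQ, iD, mD, hres, hcs => by
    obtain ⟨E, iE, mE, hE, ⟨e⟩⟩ := hcs
    have hQ : MyInj S Q := hres
    have hDE : MyInj S (D × E) := MyInj.congr hQ e
    exact MyInj.of_retract hDE (LinearMap.inl S D E) (LinearMap.fst S D E) rfl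
  | (n+1), Q, D, iQ, mQ, iD, mD, hres, hcs => by
    obtain ⟨E', C', iE', mE', iC', mC', f', g', hE', hf', hfg', hg', hC'⟩ := hres
    obtain ⟨E, C, iE, mE, iC, mC, f, g, hE, hf, hfg, hg, hCD⟩ := hcs
    obtain ⟨esch⟩ := injective_schanuel hE hf hfg hg hE' hf' hfg' hg'
    -- CoresLE n (C' × E), transported to C × E'
    have h1 : CoresLE (S := S) n (C' × E) := CoresLE.prodInj n C' E iC' mC' iE mE hC' hE
    have h2 : CoresLE (S := S) n (C × E') :=
      CoresLE.congr n (C' × E) (C × E') inferInstance inferInstance inferInstance inferInstance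
        h1 (LinearEquiv.symm esch)
    have h3 : Cosyz (S := S) n (C × E') D :=
      Cosyz.prodInj n C E' D iC mC iE' mE' iD mD hCD hE'
    exact main_inj n (C × E') D inferInstance inferInstance iD mD h2 h3

end Schanuel
section Bridge

open MyChar

variable {R : Type u} [Ring R]

/-- The character module of a module with a flat resolution of length `≤ n` has a
`MyInj`-coresolution of length `≤ n`. -/
lemma coresLE_ch_of_flatres :
    ∀ (n : ℕ) (M : Type u) (iM : AddCommGroup M) (mM : Module R M),
      HasLeftResolutionLE R (fun N _ _ => ModFlat R N) M n →
      CoresLE (S := Rᵐᵒᵖ) n (CharacterModule M)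
  | 0, M, iM, mM, hres => by
    obtain ⟨G, iG, mG, d, π, h1, h2, h3, h4, h5⟩ := hres
    have hπinj : Function.Injective π := by
      rw [injective_iff_map_eq_zero]
      intro x hx
      obtain ⟨y, hy⟩ := (h4 x).mp hx
      have : Subsingleton (G 1) := h2 1 Nat.one_pos
      rw [← hy, Subsingleton.elim y 0, map_zero]
    have e : G 0 ≃ₗ[R] M := LinearEquiv.ofBijective π ⟨hπinj, h3⟩
    have hG0 : MyInj Rᵐᵒᵖ (CharacterModule (G 0)) := myInj_ch_of_modFlat (h1 0)
    exact MyInj.congr hG0 (chCongr e).symm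
  | (n+1), M, iM, mM, hres => by
    obtain ⟨G, iG, mG, d, π, h1, h2, h3, h4, h5⟩ := hres
    set K := LinearMap.ker π with hK
    have hcod : ∀ x : G 1, π (d 0 x) = 0 := fun x => h4.apply_apply_eq_zero x
    set π' : G 1 →ₗ[R] K := (d 0).codRestrict K hcod with hπ'
    have hπ'surj : Function.Surjective π' := by
      rintro ⟨k, hk⟩
      obtain ⟨x, hx⟩ := (h4 k).mp hk
      exact ⟨x, Subtype.ext hx⟩
    have hπ'exact : Function.Exact (d 1) π' := by
      intro x
      constructor
      · intro hx
        have : d 0 x = 0 := congrArg Subtype.val hx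
        exact (h5 0 x).mp this
      · rintro ⟨y, rfl⟩
        exact Subtype.ext ((h5 0 (d 1 y)).mpr ⟨y, rfl⟩)
    have hKres : HasLeftResolutionLE R (fun N _ _ => ModFlat R N) K n :=
      ⟨fun i => G (i + 1), fun i => inferInstance, fun i => inferInstance,
        fun i => d (i + 1), π', fun i => h1 (i + 1),
        fun i hi => h2 (i + 1) (Nat.succ_lt_succ hi), hπ'surj, hπ'exact, fun i => h5 (i + 1)⟩
    have hCK : CoresLE (S := Rᵐᵒᵖ) n (CharacterModule K) :=
      coresLE_ch_of_flatres n K inferInstance inferInstance hKres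
    have hsub : Function.Exact (K.subtype) π := by
      intro x
      constructor
      · intro hx
        exact ⟨⟨x, hx⟩, rfl⟩
      · rintro ⟨y, rfl⟩
        exact y.2
    refine ⟨CharacterModule (G 0), CharacterModule K, inferInstance, inferInstance,
      inferInstance, inferInstance, chDual π, chDual K.subtype,
      myInj_ch_of_modFlat (h1 0), chDual_injective h3, chDual_exact hsub,
      chDual_surjective (Submodule.injective_subtype K), hCK⟩

/-- Over a ring of finite weak global dimension, Gorenstein flat modules are flat. -/
lemma modFlat_of_gorensteinFlat (hfin : wgldim R ≠ ⊤)
    {M : Type u} [AddCommGroup M] [Module R M] (hM : GorensteinFlat R M) : ModFlat R M := by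
  set w := (wgldim R).toNat with hwdef
  have hw : wgldim R = (w : ℕ∞) := (ENat.coe_toNat hfin).symm
  obtain ⟨F, iF, mF, d, hflat, hex, ⟨e⟩, -⟩ := hM
  -- short exact sequences between consecutive kernels
  have key : ∀ j : ℤ,
      Function.Exact ((LinearMap.ker (d j)).subtype)
        ((d j).codRestrict (LinearMap.ker (d (j+1))) (fun x => (hex j).apply_apply_eq_zero x)) ∧
      Function.Surjective
        ((d j).codRestrict (LinearMap.ker (d (j+1))) (fun x => (hex j).apply_apply_eq_zero x)) := by
    intro j
    constructor
    · intro x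
      constructor
      · intro hx
        have hx' : d j x = 0 := congrArg Subtype.val hx
        exact ⟨⟨x, hx'⟩, rfl⟩
      · rintro ⟨y, rfl⟩
        exact Subtype.ext y.2
    · rintro ⟨k, hk⟩
      obtain ⟨x, hx⟩ := (hex j k).mp hk
      exact ⟨x, Subtype.ext hx⟩
  -- cosyzygy chain on character modules
  have chain : ∀ n : ℕ, Cosyz (S := Rᵐᵒᵖ) n (CharacterModule (LinearMap.ker (d (n : ℤ))))
      (CharacterModule (LinearMap.ker (d (0 : ℤ)))) := by
    intro n
    induction n with
    | zero => exact cosyz_refl _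
    | succ n ih =>
      have hcast : ((n + 1 : ℕ) : ℤ) = (n : ℤ) + 1 := by push_cast; ring
      rw [hcast]
      refine ⟨CharacterModule (F (n : ℤ)), CharacterModule (LinearMap.ker (d (n : ℤ))),
        inferInstance, inferInstance, inferInstance, inferInstance,
        chDual ((d (n : ℤ)).codRestrict (LinearMap.ker (d ((n : ℤ)+1)))
          (fun x => (hex (n : ℤ)).apply_apply_eq_zero x)),
        chDual ((LinearMap.ker (d (n : ℤ))).subtype),
        myInj_ch_of_modFlat (hflat (n : ℤ)),
        chDual_injective (key (n : ℤ)).2,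
        chDual_exact (key (n : ℤ)).1,
        chDual_surjective (Submodule.injective_subtype _), ih⟩
  -- coresolution of the top character module
  have hfd : fDim R (LinearMap.ker (d (w : ℤ))) ≤ (w : ℕ∞) := by
    rw [← hw]
    exact fDim_le_wgldim _
  obtain ⟨n0, hn0, hn0w⟩ := exists_resolution_of_dim_le
    (T := {n : ℕ | HasLeftResolutionLE R (fun N _ _ => ModFlat R N)
      (LinearMap.ker (d (w : ℤ))) n}) hfd
  have hres : HasLeftResolutionLE R (fun N _ _ => ModFlat R N)
      (LinearMap.ker (d (w : ℤ))) w := HasLeftResolutionLE.pad hn0w hn0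
  have hcores : CoresLE (S := Rᵐᵒᵖ) w (CharacterModule (LinearMap.ker (d (w : ℤ)))) :=
    coresLE_ch_of_flatres w _ inferInstance inferInstance hres
  have hK0 : MyInj Rᵐᵒᵖ (CharacterModule (LinearMap.ker (d (0 : ℤ)))) :=
    main_inj w _ _ inferInstance inferInstance inferInstance inferInstance hcores (chain w)
  have hChM : MyInj Rᵐᵒᵖ (CharacterModule M) :=
    MyInj.congr hK0 (chCongr e)
  exact modFlat_of_myInj_ch hChM

end Bridge
/-- `l.wGgldim(R) ≤ wgldim(R)`, with equality if `wgldim(R)` is finite. -/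
theorem GFgldim_le_wgldim (R : Type u) [Ring R] :
    GFgldim R ≤ wgldim R ∧ (wgldim R ≠ ⊤ → GFgldim R = wgldim R) := by
  refine ⟨GFgldim_le, fun hfin => ?_⟩
  have key : ∀ (M : Type u) (iM : AddCommGroup M) (mM : Module R M),
      fDim R M = gfDim R M := by
    intro M iM mM
    refine le_antisymm ?_ (gfDim_le_fDim M)
    have h1 : gfDim R M ≤ fDim R M := gfDim_le_fDim M
    have h2 : fDim R M ≤ wgldim R := fDim_le_wgldim M
    have hne : gfDim R M ≠ ⊤ := by
      intro h
      rw [h] at h1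
      exact hfin (top_le_iff.mp (le_trans h1 h2))
    have hmm : gfDim R M = ((gfDim R M).toNat : ℕ∞) := (ENat.coe_toNat hne).symm
    obtain ⟨n, hn, hnm⟩ := exists_resolution_of_dim_le
      (T := {n : ℕ | HasLeftResolutionLE R (fun N _ _ => GorensteinFlat R N) M n})
      (w := (gfDim R M).toNat) hmm.le
    have hflatres : HasLeftResolutionLE R (fun N _ _ => ModFlat R N) M n := by
      obtain ⟨G, iG, mG, d, π, h1', h2', h3', h4', h5'⟩ := hn
      exact ⟨G, iG, mG, d, π, fun i => modFlat_of_gorensteinFlat hfin (h1' i),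
        h2', h3', h4', h5'⟩
    have h3 : fDim R M ≤ (n : ℕ∞) := sInf_le ⟨n, hflatres, rfl⟩
    refine le_trans h3 (le_trans ?_ hmm.ge)
    exact_mod_cast hnm
  have hsets : {d : ℕ∞ | ∃ (M : Type u) (_ : AddCommGroup M) (_ : Module R M), d = gfDim R M} =
      {d : ℕ∞ | ∃ (M : Type u) (_ : AddCommGroup M) (_ : Module R M), d = fDim R M} := by
    ext d
    constructor
    · rintro ⟨M, iM, mM, rfl⟩
      exact ⟨M, iM, mM, (key M iM mM).symm⟩
    · rintro ⟨M, iM, mM, rfl⟩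
      exact ⟨M, iM, mM, key M iM mM⟩
  show sSup _ = sSup _
  rw [hsets]
end

section
/- If M is a Gorenstein projective R-module with finite projective dimension, then M is projective. -/
/-! Definitions for Gorenstein homological algebra over an arbitrary
associative ring `R` (left modules; right modules are `Rᵐᵒᵖ`-modules). -/

universe u

section ProofAux

variable {R : Type u} [Ring R]

/-- Shift a projective resolution of `K` to one of `ker π`. -/
lemma ker_res {G : ℕ → Type u} [iA : ∀ i, AddCommGroup (G i)] [iM : ∀ i, Module R (G i)]
    (dG : ∀ i, G (i + 1) →ₗ[R] G i) {T : Type u} [AddCommGroup T] [Module R T]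
    (π : G 0 →ₗ[R] T) (m : ℕ)
    (hGproj : ∀ i, Module.Projective R (G i))
    (hss : ∀ i, m + 1 < i → Subsingleton (G i))
    (hexπ : Function.Exact (dG 0) π)
    (hexd : ∀ i, Function.Exact (dG (i + 1)) (dG i)) :
    HasLeftResolutionLE R (fun N _ _ => Module.Projective R N) (LinearMap.ker π) m := by
  refine ⟨fun j => G (j + 1), fun j => iA (j + 1), fun j => iM (j + 1),
    fun j => dG (j + 1),
    (dG 0).codRestrict (LinearMap.ker π) (fun c => LinearMap.mem_ker.mpr ((hexπ (dG 0 c)).mpr ⟨c, rfl⟩)),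
    fun j => hGproj (j + 1), fun j hj => hss (j + 1) (by omega), ?_, ?_, fun j => hexd (j + 1)⟩
  · rintro ⟨y, hy⟩
    obtain ⟨x, hx⟩ := (hexπ y).mp (LinearMap.mem_ker.mp hy)
    exact ⟨x, Subtype.ext hx⟩
  · intro y
    exact Iff.trans ⟨fun h => congrArg Subtype.val h, fun h => Subtype.ext h⟩ (hexd 0 y)

/-- Key lemma: against a totally acyclic complex, a module of finite projective dimension
behaves like a projective module. -/
lemma key (P : ℤ → Type u) [iAP : ∀ i, AddCommGroup (P i)] [iMP : ∀ i, Module R (P i)]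
    (d : ∀ i, P i →ₗ[R] P (i + 1))
    (hproj : ∀ i, Module.Projective R (P i))
    (hex : ∀ i, Function.Exact (d i) (d (i + 1)))
    (hhom : ∀ (Q : Type u) (_ : AddCommGroup Q) (_ : Module R Q), Module.Projective R Q →
        ∀ i, Function.Exact (fun g : P (i + 1 + 1) →ₗ[R] Q => g.comp (d (i + 1)))
          (fun g : P (i + 1) →ₗ[R] Q => g.comp (d i))) :
    ∀ (n : ℕ) (K : Type u) [AddCommGroup K] [Module R K],
      HasLeftResolutionLE R (fun N _ _ => Module.Projective R N) K n →
      ∀ (i : ℤ) (v : P (i + 1) →ₗ[R] K), v.comp (d i) = 0 →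
        ∃ w : P (i + 1 + 1) →ₗ[R] K, w.comp (d (i + 1)) = v := by
  intro n
  induction n with
  | zero =>
    intro K _ _ hres i v hv
    obtain ⟨G, iAG, iMG, dG, π, hGproj, hss, hπs, hexπ, hexd⟩ := hres
    letI := iAG; letI := iMG
    -- π is bijective, so K is projective
    have hπinj : Function.Injective π := by
      intro a b hab
      have h0 : π (a - b) = 0 := by simp [map_sub, hab]
      obtain ⟨x, hx⟩ := (hexπ (a - b)).mp h0
      haveI : Subsingleton (G 1) := hss 1 (by omega)
      have : x = (0 : G 1) := Subsingleton.elim _ _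
      rw [this, map_zero] at hx
      have := hx.symm
      rwa [sub_eq_zero] at this
    let eK : G 0 ≃ₗ[R] K := LinearEquiv.ofBijective π ⟨hπinj, hπs⟩
    haveI : Module.Projective R (G 0) := hGproj 0
    have hKproj : Module.Projective R K :=
      Module.Projective.of_split (eK.symm : K →ₗ[R] G 0) (eK : G 0 →ₗ[R] K)
        (by ext x; simp)
    obtain ⟨w, hw⟩ := (hhom K inferInstance inferInstance hKproj i v).mp hv
    exact ⟨w, hw⟩
  | succ n ih =>
    intro K _ _ hres i v hv
    obtain ⟨G, iAG, iMG, dG, π, hGproj, hss, hπs, hexπ, hexd⟩ := hres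
    letI := iAG; letI := iMG
    -- the syzygy K' has a shorter resolution
    have hresK' : HasLeftResolutionLE R (fun N _ _ => Module.Projective R N)
        (LinearMap.ker π) n := ker_res dG π n hGproj hss hexπ hexd
    have ihK' := ih (LinearMap.ker π) hresK'
    obtain ⟨j, rfl⟩ : ∃ j, i = j + 1 := ⟨i - 1, by omega⟩
    haveI : Module.Projective R (P (j + 1 + 1)) := hproj _
    -- lift v through π
    obtain ⟨t, ht⟩ := Module.projective_lifting_property π v hπs
    -- t ∘ d (j+1) lands in ker π
    have hmem : ∀ x, (t ∘ₗ d (j + 1)) x ∈ LinearMap.ker π := by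
      intro x
      have : π (t (d (j + 1) x)) = v (d (j + 1) x) := by
        rw [← LinearMap.comp_apply, ht]
      rw [LinearMap.mem_ker, LinearMap.comp_apply, this, ← LinearMap.comp_apply, hv,
        LinearMap.zero_apply]
    let u : P (j + 1) →ₗ[R] LinearMap.ker π := (t ∘ₗ d (j + 1)).codRestrict _ hmem
    have hu : u.comp (d j) = 0 := by
      apply LinearMap.ext; intro x
      apply Subtype.ext
      have h0 : d (j + 1) (d j x) = 0 := (hex j (d j x)).mpr ⟨x, rfl⟩
      simp [u, LinearMap.codRestrict, h0]
    obtain ⟨u', hu'⟩ := ihK' j u hu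
    let t' : P (j + 1 + 1) →ₗ[R] G 0 := t - (LinearMap.ker π).subtype ∘ₗ u'
    have hπsub : π ∘ₗ (LinearMap.ker π).subtype = 0 := by
      apply LinearMap.ext; rintro ⟨y, hy⟩; exact hy
    have hπt' : π ∘ₗ t' = v := by
      simp only [t', LinearMap.comp_sub, ← LinearMap.comp_assoc, hπsub, ht,
        LinearMap.zero_comp, sub_zero]
    have ht'd : t' ∘ₗ d (j + 1) = 0 := by
      have hsu : (LinearMap.ker π).subtype ∘ₗ u = t ∘ₗ d (j + 1) :=
        LinearMap.subtype_comp_codRestrict _ _ hmem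
      calc t' ∘ₗ d (j + 1)
          = t ∘ₗ d (j + 1) - (LinearMap.ker π).subtype ∘ₗ (u' ∘ₗ d (j + 1)) := by
            simp [t', LinearMap.sub_comp, LinearMap.comp_assoc]
        _ = 0 := by rw [hu', hsu, sub_self]
    obtain ⟨w, hw⟩ := (hhom (G 0) inferInstance inferInstance (hGproj 0) (j + 1) t').mp ht'd
    refine ⟨π ∘ₗ w, ?_⟩
    have hw' : w ∘ₗ d (j + 1 + 1) = t' := hw
    rw [LinearMap.comp_assoc, hw', hπt']

end ProofAux

/-- A Gorenstein projective `R`-module of finite projective dimension is projective. -/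
theorem projective_of_gorenstein_projective_of_pDim_finite (R : Type u) [Ring R]
    (M : Type u) [AddCommGroup M] [Module R M]
    (h1 : GorensteinProjective R M) (h2 : pDim R M ≠ ⊤) :
    Module.Projective R M := by
  obtain ⟨P, iAP, iMP, d, hproj, hex, ⟨e⟩, hhom⟩ := h1
  letI := iAP; letI := iMP
  -- extract a finite projective resolution of M
  have hne : {n : ℕ | HasLeftResolutionLE R (fun N _ _ => Module.Projective R N) M n}.Nonempty := by
    by_contra h
    rw [Set.not_nonempty_iff_eq_empty] at h
    apply h2
    rw [pDim, h, Set.image_empty, sInf_empty]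
  obtain ⟨n, hn⟩ := hne
  obtain ⟨G, iAG, iMG, dG, π, hGproj, hss, hπs, hexπ, hexd⟩ := hn
  letI := iAG; letI := iMG
  -- the first syzygy of M has finite projective dimension
  have hresK : HasLeftResolutionLE R (fun N _ _ => Module.Projective R N)
      (LinearMap.ker π) n :=
    ker_res dG π n hGproj (fun i hi => hss i (by omega)) hexπ hexd
  have hT := key P d hproj hex hhom n (LinearMap.ker π) hresK
  -- cleanly typed boundary maps of the complex
  let d1 : P (-1) →ₗ[R] P 0 := by exact d (-1)
  let d2 : P (-2) →ₗ[R] P (-1) := by exact d (-2)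
  let d3 : P (-3) →ₗ[R] P (-2) := by exact d (-3)
  have hex1 : Function.Exact d1 (d 0) := by exact hex (-1)
  have hex2 : Function.Exact d2 d1 := by exact hex (-2)
  have hex3 : Function.Exact d3 d2 := by exact hex (-3)
  have hT' : ∀ v : P (-2) →ₗ[R] LinearMap.ker π, v ∘ₗ d3 = 0 →
      ∃ w : P (-1) →ₗ[R] LinearMap.ker π, w ∘ₗ d2 = v := by exact hT (-3)
  -- surjection p : P (-1) → M coming from the complex
  have hmem0 : ∀ x, d1 x ∈ LinearMap.ker (d 0) :=
    fun x => LinearMap.mem_ker.mpr ((hex1 (d1 x)).mpr ⟨x, rfl⟩)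
  let p0 : P (-1) →ₗ[R] LinearMap.ker (d 0) := d1.codRestrict _ hmem0
  let p : P (-1) →ₗ[R] M := (e.symm : LinearMap.ker (d 0) →ₗ[R] M) ∘ₗ p0
  have hp0s : Function.Surjective p0 := by
    rintro ⟨y, hy⟩
    obtain ⟨x, hx⟩ := (hex1 y).mp (LinearMap.mem_ker.mp hy)
    exact ⟨x, Subtype.ext hx⟩
  have hps : Function.Surjective p := e.symm.surjective.comp hp0s
  haveI : Module.Projective R (P (-1)) := hproj _
  obtain ⟨t, ht⟩ := Module.projective_lifting_property π p hπs
  have hpd2 : p ∘ₗ d2 = 0 := by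
    apply LinearMap.ext; intro x
    have h0 : d1 (d2 x) = 0 := (hex2 (d2 x)).mpr ⟨x, rfl⟩
    have h1 : p0 (d2 x) = 0 := Subtype.ext (by simpa [p0] using h0)
    simp [p, h1]
  have hmem : ∀ x, (t ∘ₗ d2) x ∈ LinearMap.ker π := by
    intro x
    have hx : π (t (d2 x)) = p (d2 x) := by
      rw [← LinearMap.comp_apply, ht]
    rw [LinearMap.mem_ker, LinearMap.comp_apply, hx, ← LinearMap.comp_apply, hpd2,
      LinearMap.zero_apply]
  let v : P (-2) →ₗ[R] LinearMap.ker π := (t ∘ₗ d2).codRestrict _ hmem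
  have hv : v ∘ₗ d3 = 0 := by
    apply LinearMap.ext; intro x
    apply Subtype.ext
    have h0 : d2 (d3 x) = 0 := (hex3 (d3 x)).mpr ⟨x, rfl⟩
    simp [v, h0]
  obtain ⟨w, hw⟩ := hT' v hv
  let t' : P (-1) →ₗ[R] G 0 := t - (LinearMap.ker π).subtype ∘ₗ w
  have hπsub : π ∘ₗ (LinearMap.ker π).subtype = 0 := by
    apply LinearMap.ext; rintro ⟨y, hy⟩; exact hy
  have hπt' : π ∘ₗ t' = p := by
    simp only [t', LinearMap.comp_sub, ← LinearMap.comp_assoc, hπsub, ht,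
      LinearMap.zero_comp, sub_zero]
  have ht'd : t' ∘ₗ d2 = 0 := by
    have hsu : (LinearMap.ker π).subtype ∘ₗ v = t ∘ₗ d2 :=
      LinearMap.subtype_comp_codRestrict _ _ hmem
    calc t' ∘ₗ d2
        = t ∘ₗ d2 - (LinearMap.ker π).subtype ∘ₗ (w ∘ₗ d2) := by
          simp [t', LinearMap.sub_comp, LinearMap.comp_assoc]
      _ = 0 := by rw [hw, hsu, sub_self]
  -- kernel of p is contained in kernel of t'
  have hker : LinearMap.ker p ≤ LinearMap.ker t' := by
    intro x hx
    have hx0 : p x = 0 := LinearMap.mem_ker.mp hx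
    have hp00 : p0 x = 0 := by
      have h2' : e.symm (p0 x) = e.symm 0 := by simpa [p] using hx0
      exact e.symm.injective h2'
    have hd1 : d1 x = 0 := by
      have := congrArg Subtype.val hp00
      simpa [p0] using this
    obtain ⟨y, hy⟩ := (hex2 x).mp hd1
    have hxy : t' x = (t' ∘ₗ d2) y := by rw [LinearMap.comp_apply, hy]
    rw [LinearMap.mem_ker, hxy, ht'd, LinearMap.zero_apply]
  let s0 : (P (-1) ⧸ LinearMap.ker p) →ₗ[R] G 0 := (LinearMap.ker p).liftQ t' hker
  let q : (P (-1) ⧸ LinearMap.ker p) ≃ₗ[R] M := p.quotKerEquivOfSurjective hps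
  let s : M →ₗ[R] G 0 := s0 ∘ₗ (q.symm : M →ₗ[R] _)
  haveI : Module.Projective R (G 0) := hGproj 0
  refine Module.Projective.of_split s π ?_
  apply LinearMap.ext; intro m
  obtain ⟨x, rfl⟩ := hps m
  have hq : q (Submodule.Quotient.mk x) = p x := by
    simp [q, LinearMap.quotKerEquivOfSurjective, LinearMap.quotKerEquivRange_apply_mk]
  have hq' : q.symm (p x) = Submodule.Quotient.mk x := by
    rw [LinearEquiv.symm_apply_eq]; exact hq.symm
  simp only [LinearMap.comp_apply, LinearMap.coe_comp, Function.comp_apply, s,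
    LinearEquiv.coe_coe, hq', s0, Submodule.liftQ_apply, LinearMap.id_apply]
  exact LinearMap.congr_fun hπt' x
end

section
/- If M is strongly Gorenstein projective, witnessed by a short exact sequence 0 → M → P → M → 0 with P projective and id_R(P) ≤ n, and 0 → M → I_0 → ⋯ → I_{n-1} → I_n → 0 is an exact sequence with I_0, …, I_{n-1} injective, then applying the Horseshoe construction yields an exact sequence 0 → I_n → E_n → I_n → 0 where E_n is injective. -/
/-! Definitions for Gorenstein homological algebra over an arbitrary
associative ring `R` (left modules; right modules are `Rᵐᵒᵖ`-modules). -/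

universe u

section ExtDef

open CategoryTheory

/-- `Ext^i_R(M, Q) = 0` (vanishing of the `i`-th Ext group of left `R`-modules). -/
def extVanish (R : Type u) [Ring R] (M Q : Type u) [AddCommGroup M] [Module R M]
    [AddCommGroup Q] [Module R Q] (i : ℕ) : Prop :=
  letI := HasDerivedCategory.standard (ModuleCat.{u} R)
  letI := hasExt_of_hasDerivedCategory (ModuleCat.{u} R)
  Subsingleton (CategoryTheory.Abelian.Ext (ModuleCat.of R M) (ModuleCat.of R Q) i)

end ExtDef


section Aux
variable (R : Type u) [Ring R]

def IsInjSummand (E : Type u) [AddCommGroup E] [Module R E] : Prop :=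
  ∃ (Q : Type u) (_ : AddCommGroup Q) (_ : Module R Q) (s : E →ₗ[R] Q) (r : Q →ₗ[R] E),
    Module.Injective R Q ∧ ∀ x, r (s x) = x

theorem inj_of_subsingleton (E : Type u) [AddCommGroup E] [Module R E] [Subsingleton E] :
    Module.Injective R E :=
  ⟨fun _ _ _ _ _ _ f _ g => ⟨0, fun x => Subsingleton.elim _ _⟩⟩

theorem inj_prod (A B : Type u) [AddCommGroup A] [Module R A] [AddCommGroup B] [Module R B]
    (hA : Module.Injective R A) (hB : Module.Injective R B) : Module.Injective R (A × B) := by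
  constructor
  intro X Y _ _ _ _ f hf g
  obtain ⟨h1, hh1⟩ := hA.out f hf ((LinearMap.fst R A B).comp g)
  obtain ⟨h2, hh2⟩ := hB.out f hf ((LinearMap.snd R A B).comp g)
  exact ⟨h1.prod h2, fun x => Prod.ext (hh1 x) (hh2 x)⟩

theorem injSummand_injective (E : Type u) [AddCommGroup E] [Module R E]
    (h : IsInjSummand R E) : Module.Injective R E := by
  obtain ⟨Q, _, _, s, r, hQ, hrs⟩ := h
  constructor
  intro X Y _ _ _ _ f hf g
  obtain ⟨h', hh'⟩ := hQ.out f hf (s.comp g)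
  exact ⟨r.comp h', fun x => by simp [hh' x, hrs]⟩

theorem injSummand_of_equiv {E F : Type u} [AddCommGroup E] [Module R E] [AddCommGroup F]
    [Module R F] (e : E ≃ₗ[R] F) (h : IsInjSummand R F) : IsInjSummand R E := by
  obtain ⟨Q, i1, i2, s, r, hQ, hrs⟩ := h
  exact ⟨Q, i1, i2, s.comp (e : E →ₗ[R] F), (e.symm : F →ₗ[R] E).comp r, hQ,
    fun x => by simp [hrs]⟩

theorem injSummand_fst {A B : Type u} [AddCommGroup A] [Module R A] [AddCommGroup B] [Module R B]
    (h : IsInjSummand R (A × B)) : IsInjSummand R A := by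
  obtain ⟨Q, i1, i2, s, r, hQ, hrs⟩ := h
  exact ⟨Q, i1, i2, s.comp (LinearMap.inl R A B), (LinearMap.fst R A B).comp r, hQ,
    fun x => by simpa using congrArg Prod.fst (hrs (x, 0))⟩

theorem injSummand_of_injective (E : Type u) [AddCommGroup E] [Module R E]
    (h : Module.Injective R E) : IsInjSummand R E :=
  ⟨E, ‹_›, ‹_›, LinearMap.id, LinearMap.id, h, fun _ => rfl⟩

theorem split_of_injective {A B C : Type u} [AddCommGroup A] [Module R A] [AddCommGroup B]
    [Module R B] [AddCommGroup C] [Module R C] (f : A →ₗ[R] B) (g : B →ₗ[R] C)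
    (hA : Module.Injective R A) (hf : Function.Injective f) (hfg : Function.Exact f g)
    (hg : Function.Surjective g) : Nonempty (B ≃ₗ[R] A × C) := by
  obtain ⟨r, hr⟩ := hA.out f hf LinearMap.id
  refine ⟨LinearEquiv.ofBijective (r.prod g) ⟨?_, ?_⟩⟩
  · intro x y hxy
    have h1 : r x = r y := congrArg Prod.fst hxy
    have h2 : g x = g y := congrArg Prod.snd hxy
    have : g (x - y) = 0 := by simp [h2]
    obtain ⟨a, ha⟩ := (hfg (x - y)).mp this
    have : r (x - y) = 0 := by simp [h1]
    rw [← ha, hr] at this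
    simp only [LinearMap.id_coe, id_eq] at this
    have hxy0 : x - y = 0 := by rw [← ha, this, map_zero]
    exact sub_eq_zero.mp hxy0
  · rintro ⟨a, c⟩
    obtain ⟨b0, hb0⟩ := hg c
    refine ⟨b0 + f (a - r b0), ?_⟩
    have hg0 : g (f (a - r b0)) = 0 := (hfg _).mpr ⟨_, rfl⟩
    simp only [LinearMap.prod_apply, Function.prod, map_add, hr, hb0, hg0]
    simp [hr, hfg.apply_apply_eq_zero]

def myProdComm (A B : Type u) [AddCommGroup A] [Module R A] [AddCommGroup B] [Module R B] :
    (A × B) ≃ₗ[R] (B × A) where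
  toFun x := (x.2, x.1)
  invFun x := (x.2, x.1)
  map_add' _ _ := rfl
  map_smul' _ _ := rfl
  left_inv _ := rfl
  right_inv _ := rfl

theorem schanuel_pair {P J G : Type u} [AddCommGroup P] [Module R P] [AddCommGroup J]
    [Module R J] [AddCommGroup G] [Module R G]
    (fJ : P →ₗ[R] J) (fG : P →ₗ[R] G) (hJ : Module.Injective R J) (hG : Module.Injective R G)
    (hfJ : Function.Injective fJ) (hfG : Function.Injective fG) :
    Nonempty (((J ⧸ LinearMap.range fJ) × G) ≃ₗ[R] ((G ⧸ LinearMap.range fG) × J)) := by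
  set N : Submodule R (J × G) := LinearMap.range (fJ.prod (-fG)) with hN
  have memN : ∀ (x : J × G), x ∈ N ↔ ∃ p, fJ p = x.1 ∧ -fG p = x.2 := by
    rintro ⟨j, g⟩
    constructor
    · rintro ⟨p, hp⟩
      simp only [LinearMap.prod_apply, Function.prod, LinearMap.neg_apply, Prod.mk.injEq] at hp
      exact ⟨p, hp⟩
    · rintro ⟨p, h1, h2⟩
      exact ⟨p, by simp only [LinearMap.prod_apply, Function.prod, LinearMap.neg_apply,
        Prod.mk.injEq]; exact ⟨h1, h2⟩⟩
  set X := (J × G) ⧸ N with hX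
  let mk : (J × G) →ₗ[R] X := N.mkQ
  let uJ : J →ₗ[R] X := mk.comp (LinearMap.inl R J G)
  let uG : G →ₗ[R] X := mk.comp (LinearMap.inr R J G)
  have hkerG : N ≤ LinearMap.ker ((LinearMap.range fG).mkQ.comp (LinearMap.snd R J G)) := by
    intro x hx
    obtain ⟨p, h1, h2⟩ := (memN x).mp hx
    simp only [LinearMap.mem_ker, LinearMap.comp_apply, LinearMap.snd_apply,
      Submodule.mkQ_apply, Submodule.Quotient.mk_eq_zero]
    exact ⟨-p, by rw [map_neg]; exact h2⟩
  have hkerJ : N ≤ LinearMap.ker ((LinearMap.range fJ).mkQ.comp (LinearMap.fst R J G)) := by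
    intro x hx
    obtain ⟨p, h1, h2⟩ := (memN x).mp hx
    simp only [LinearMap.mem_ker, LinearMap.comp_apply, LinearMap.fst_apply,
      Submodule.mkQ_apply, Submodule.Quotient.mk_eq_zero]
    exact ⟨p, h1⟩
  let qG : X →ₗ[R] G ⧸ LinearMap.range fG := N.liftQ _ hkerG
  let qJ : X →ₗ[R] J ⧸ LinearMap.range fJ := N.liftQ _ hkerJ
  have hqG : ∀ x : J × G, qG (Submodule.Quotient.mk x) = Submodule.Quotient.mk x.2 := fun x => rfl
  have hqJ : ∀ x : J × G, qJ (Submodule.Quotient.mk x) = Submodule.Quotient.mk x.1 := fun x => rfl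
  have huJmk : ∀ j : J, uJ j = Submodule.Quotient.mk (j, (0:G)) := fun j => rfl
  have huGmk : ∀ g : G, uG g = Submodule.Quotient.mk ((0:J), g) := fun g => rfl
  -- SES  0 → J → X → G/P → 0
  have huJ : Function.Injective uJ := by
    intro a b hab
    rw [huJmk, huJmk] at hab
    rw [Submodule.Quotient.eq] at hab
    obtain ⟨p, h1, h2⟩ := (memN _).mp hab
    simp at h1 h2
    have hp0 : p = 0 := hfG (by rw [map_zero]; exact h2)
    rw [hp0, map_zero] at h1
    exact sub_eq_zero.mp h1.symm
  have hexJ : Function.Exact uJ qG := by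
    intro x
    obtain ⟨⟨j, g⟩, rfl⟩ := Submodule.Quotient.mk_surjective N x
    rw [hqG]
    constructor
    · intro hx
      rw [Submodule.Quotient.mk_eq_zero] at hx
      obtain ⟨p, hp⟩ := hx
      refine ⟨j + fJ p, ?_⟩
      rw [huJmk, Submodule.Quotient.eq]
      refine (memN _).mpr ⟨p, by simp, by simp [hp]⟩
    · rintro ⟨j', hj'⟩
      rw [huJmk, Submodule.Quotient.eq] at hj'
      obtain ⟨p, h1, h2⟩ := (memN _).mp hj'
      rw [Submodule.Quotient.mk_eq_zero]
      exact ⟨p, by simpa using congrArg Neg.neg h2⟩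
  have hsG : Function.Surjective qG := by
    intro y
    obtain ⟨g, rfl⟩ := Submodule.Quotient.mk_surjective _ y
    exact ⟨Submodule.Quotient.mk ((0 : J), g), hqG _⟩
  obtain ⟨e1⟩ := split_of_injective R uJ qG hJ huJ hexJ hsG
  -- SES  0 → G → X → J/P → 0
  have huG : Function.Injective uG := by
    intro a b hab
    rw [huGmk, huGmk] at hab
    rw [Submodule.Quotient.eq] at hab
    obtain ⟨p, h1, h2⟩ := (memN _).mp hab
    simp at h1 h2
    have hp0 : p = 0 := hfJ (by rw [map_zero]; exact h1)
    rw [hp0, map_zero, neg_zero] at h2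
    exact sub_eq_zero.mp h2.symm
  have hexG : Function.Exact uG qJ := by
    intro x
    obtain ⟨⟨j, g⟩, rfl⟩ := Submodule.Quotient.mk_surjective N x
    rw [hqJ]
    constructor
    · intro hx
      rw [Submodule.Quotient.mk_eq_zero] at hx
      obtain ⟨p, hp⟩ := hx
      refine ⟨g + fG p, ?_⟩
      rw [huGmk, Submodule.Quotient.eq]
      refine (memN _).mpr ⟨-p, by simp [map_neg, hp], by simp [map_neg]⟩
    · rintro ⟨g', hg'⟩
      rw [huGmk, Submodule.Quotient.eq] at hg'
      obtain ⟨p, h1, h2⟩ := (memN _).mp hg'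
      rw [Submodule.Quotient.mk_eq_zero]
      exact ⟨-p, by rw [map_neg]; simpa using congrArg Neg.neg h1⟩
  have hsJ : Function.Surjective qJ := by
    intro y
    obtain ⟨j, rfl⟩ := Submodule.Quotient.mk_surjective _ y
    exact ⟨Submodule.Quotient.mk (j, (0:G)), hqJ _⟩
  obtain ⟨e2⟩ := split_of_injective R uG qJ hG huG hexG hsJ
  have s1 : ((J ⧸ LinearMap.range fJ) × G) ≃ₗ[R] (G × (J ⧸ LinearMap.range fJ)) :=
    myProdComm R (J ⧸ LinearMap.range fJ) G
  have s2 : (G × (J ⧸ LinearMap.range fJ)) ≃ₗ[R] X := e2.symm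
  have s3 : X ≃ₗ[R] (J × (G ⧸ LinearMap.range fG)) := e1
  have s4 : (J × (G ⧸ LinearMap.range fG)) ≃ₗ[R] ((G ⧸ LinearMap.range fG) × J) :=
    myProdComm R J (G ⧸ LinearMap.range fG)
  exact ⟨s1.trans (s2.trans (s3.trans s4))⟩

def Cons (X : Type u) (J : ℕ → Type u) : ℕ → Type u
  | 0 => X
  | k+1 => J k

instance consACG (X : Type u) [iX : AddCommGroup X] (J : ℕ → Type u)
    [iJ : ∀ i, AddCommGroup (J i)] : ∀ i, AddCommGroup (Cons X J i)
  | 0 => iX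
  | k+1 => iJ k

instance consMod (X : Type u) [AddCommGroup X] [iX : Module R X] (J : ℕ → Type u)
    [∀ i, AddCommGroup (J i)] [iJ : ∀ i, Module R (J i)] : ∀ i, Module R (Cons X J i)
  | 0 => iX
  | k+1 => iJ k

def consMap {X : Type u} [AddCommGroup X] [Module R X] {B : ℕ → Type u}
    [∀ i, AddCommGroup (B i)] [∀ i, Module R (B i)]
    (f0 : X →ₗ[R] B 0) (g : ∀ k, B k →ₗ[R] B (k+1)) :
    ∀ i, Cons X B i →ₗ[R] Cons X B (i+1)
  | 0 => f0
  | k+1 => g k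

theorem cosyzygy_embed {A B C : Type u} [AddCommGroup A] [Module R A] [AddCommGroup B]
    [Module R B] [AddCommGroup C] [Module R C] (f : A →ₗ[R] B) (g : B →ₗ[R] C)
    (h : Function.Exact f g) :
    ∃ ι : (B ⧸ LinearMap.range f) →ₗ[R] C, Function.Injective ι ∧
      (∀ b, ι (Submodule.Quotient.mk b) = g b) ∧ Set.range ι = Set.range g := by
  have hker : LinearMap.ker g = LinearMap.range f := LinearMap.exact_iff.mp h
  refine ⟨(LinearMap.range f).liftQ g (le_of_eq hker.symm), ?_, fun b => rfl, ?_⟩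
  · rw [← LinearMap.ker_eq_bot]
    exact Submodule.ker_liftQ_eq_bot' _ _ hker.symm
  · ext y
    constructor
    · rintro ⟨x, rfl⟩
      obtain ⟨b, rfl⟩ := Submodule.Quotient.mk_surjective _ x
      exact ⟨b, rfl⟩
    · rintro ⟨b, rfl⟩
      exact ⟨Submodule.Quotient.mk b, rfl⟩

theorem exact_comp_surj {A B C D : Type u} [AddCommGroup A] [Module R A] [AddCommGroup B]
    [Module R B] [AddCommGroup C] [Module R C] [AddCommGroup D] [Module R D]
    (s : A →ₗ[R] B) (f : B →ₗ[R] C) (g : C →ₗ[R] D) (hs : Function.Surjective s)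
    (h : Function.Exact f g) : Function.Exact (f.comp s) g := by
  intro y
  rw [h y]
  constructor
  · rintro ⟨b, rfl⟩
    obtain ⟨a, rfl⟩ := hs b
    exact ⟨a, rfl⟩
  · rintro ⟨a, rfl⟩
    exact ⟨s a, rfl⟩

theorem sch (n : ℕ) :
    ∀ (P : Type u) [AddCommGroup P] [Module R P]
      (J : ℕ → Type u) [∀ i, AddCommGroup (J i)] [∀ i, Module R (J i)]
      (G : ℕ → Type u) [∀ i, AddCommGroup (G i)] [∀ i, Module R (G i)]
      (fJ : P →ₗ[R] J 0) (dJ : ∀ i, J i →ₗ[R] J (i+1))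
      (fG : P →ₗ[R] G 0) (dG : ∀ i, G i →ₗ[R] G (i+1)),
      (∀ i, i < n → Module.Injective R (J i)) → (∀ i, n < i → Subsingleton (J i)) →
      Function.Injective fJ → Function.Exact fJ (dJ 0) →
      (∀ i, Function.Exact (dJ i) (dJ (i+1))) →
      (∀ i, Module.Injective R (G i)) → (∀ i, n < i → Subsingleton (G i)) →
      Function.Injective fG → Function.Exact fG (dG 0) →
      (∀ i, Function.Exact (dG i) (dG (i+1))) →
      IsInjSummand R (J n) := by
  induction n with
  | zero =>
    intro P _ _ J _ _ G _ _ fJ dJ fG dG hJinj hJvan hfJ hexJ0 hexJ hGinj hGvan hfG hexG0 hexG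
    have hsJ : Function.Surjective fJ := fun y => by
      haveI : Subsingleton (J 1) := hJvan 1 one_pos
      exact (hexJ0 y).mp (Subsingleton.elim _ _)
    have hsG : Function.Surjective fG := fun y => by
      haveI : Subsingleton (G 1) := hGvan 1 one_pos
      exact (hexG0 y).mp (Subsingleton.elim _ _)
    exact injSummand_of_equiv R
      ((LinearEquiv.ofBijective fJ ⟨hfJ, hsJ⟩).symm.trans (LinearEquiv.ofBijective fG ⟨hfG, hsG⟩))
      (injSummand_of_injective R _ (hGinj 0))
  | succ n ih =>
    intro P _ _ J _ _ G _ _ fJ dJ fG dG hJinj hJvan hfJ hexJ0 hexJ hGinj hGvan hfG hexG0 hexG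
    obtain ⟨ιC, hιCinj, hιCmk, hιCrange⟩ := cosyzygy_embed R fJ (dJ 0) hexJ0
    obtain ⟨ιD, hιDinj, hιDmk, hιDrange⟩ := cosyzygy_embed R fG (dG 0) hexG0
    obtain ⟨ψ⟩ := schanuel_pair R fJ fG (hJinj 0 (Nat.succ_pos n)) (hGinj 0) hfJ hfG
    set J' : ℕ → Type u := Cons (J 1 × G 0) (fun k => J (k+2)) with hJ'
    set G' : ℕ → Type u := Cons (G 1 × J 0) (fun k => G (k+2)) with hG'
    let fJ' : ((J 0 ⧸ LinearMap.range fJ) × G 0) →ₗ[R] J' 0 :=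
      ιC.prodMap (LinearMap.id : G 0 →ₗ[R] G 0)
    let dJ' : ∀ i, J' i →ₗ[R] J' (i+1) :=
      consMap R ((dJ 1).comp (LinearMap.fst R (J 1) (G 0))) (fun k => dJ (k+2))
    let fG' : ((J 0 ⧸ LinearMap.range fJ) × G 0) →ₗ[R] G' 0 :=
      (ιD.prodMap (LinearMap.id : J 0 →ₗ[R] J 0)).comp (ψ : _ →ₗ[R] _)
    let dG' : ∀ i, G' i →ₗ[R] G' (i+1) :=
      consMap R ((dG 1).comp (LinearMap.fst R (G 1) (J 0))) (fun k => dG (k+2))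
    have hJ'inj : ∀ i, i < n → Module.Injective R (J' i) := by
      rintro (_|k) hi
      · exact inj_prod R _ _ (hJinj 1 (by omega)) (hGinj 0)
      · exact hJinj (k+2) (by omega)
    have hJ'van : ∀ i, n < i → Subsingleton (J' i) := by
      rintro (_|k) hi
      · omega
      · exact hJvan (k+2) (by omega)
    have hfJ' : Function.Injective fJ' := by
      intro a b hab
      have hab' : (ιC a.1, a.2) = (ιC b.1, b.2) := hab
      have h1 := congrArg Prod.fst hab'
      have h2 := congrArg Prod.snd hab'
      exact Prod.ext (hιCinj h1) h2
    have hexJ'0 : Function.Exact fJ' (dJ' 0) := by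
      intro y
      constructor
      · intro hy
        have hy' : dJ 1 y.1 = 0 := hy
        obtain ⟨x, hx⟩ := (hexJ 0 y.1).mp hy'
        refine ⟨(Submodule.Quotient.mk x, y.2), ?_⟩
        have : fJ' (Submodule.Quotient.mk x, y.2) = (ιC (Submodule.Quotient.mk x), y.2) := rfl
        rw [this, hιCmk, hx]
        exact Prod.mk.eta
      · rintro ⟨⟨c, g⟩, rfl⟩
        obtain ⟨x, rfl⟩ := Submodule.Quotient.mk_surjective _ c
        show dJ 1 (ιC (Submodule.Quotient.mk x)) = 0
        rw [hιCmk]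
        exact (hexJ 0).apply_apply_eq_zero x
    have hexJ' : ∀ i, Function.Exact (dJ' i) (dJ' (i+1)) := by
      rintro (_|k)
      · intro y
        constructor
        · intro hy
          obtain ⟨x, hx⟩ := (hexJ 1 y).mp hy
          exact ⟨(x, 0), hx⟩
        · rintro ⟨x, rfl⟩
          exact (hexJ 1).apply_apply_eq_zero x.1
      · exact hexJ (k+2)
    have hG'inj : ∀ i, Module.Injective R (G' i) := by
      rintro (_|k)
      · exact inj_prod R _ _ (hGinj 1) (hJinj 0 (Nat.succ_pos n))
      · exact hGinj (k+2)
    have hG'van : ∀ i, n < i → Subsingleton (G' i) := by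
      rintro (_|k) hi
      · omega
      · exact hGvan (k+2) (by omega)
    have hfG' : Function.Injective fG' := by
      intro a b hab
      have hab' : (ιD (ψ a).1, (ψ a).2) = (ιD (ψ b).1, (ψ b).2) := hab
      have h1 := congrArg Prod.fst hab'
      have h2 := congrArg Prod.snd hab'
      exact ψ.injective (Prod.ext (hιDinj h1) h2)
    have hexG'base : Function.Exact (ιD.prodMap (LinearMap.id : J 0 →ₗ[R] J 0)) (dG' 0) := by
      intro y
      constructor
      · intro hy
        have hy' : dG 1 y.1 = 0 := hy
        obtain ⟨x, hx⟩ := (hexG 0 y.1).mp hy'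
        refine ⟨(Submodule.Quotient.mk x, y.2), ?_⟩
        have : (ιD.prodMap (LinearMap.id : J 0 →ₗ[R] J 0)) (Submodule.Quotient.mk x, y.2)
            = (ιD (Submodule.Quotient.mk x), y.2) := rfl
        rw [this, hιDmk, hx]
      · rintro ⟨⟨c, g⟩, rfl⟩
        obtain ⟨x, rfl⟩ := Submodule.Quotient.mk_surjective _ c
        show dG 1 (ιD (Submodule.Quotient.mk x)) = 0
        rw [hιDmk]
        exact (hexG 0).apply_apply_eq_zero x
    have hexG'0 : Function.Exact fG' (dG' 0) :=
      exact_comp_surj R ψ.toLinearMap _ _ ψ.surjective hexG'base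
    have hexG' : ∀ i, Function.Exact (dG' i) (dG' (i+1)) := by
      rintro (_|k)
      · intro y
        constructor
        · intro hy
          obtain ⟨x, hx⟩ := (hexG 1 y).mp hy
          exact ⟨(x, 0), hx⟩
        · rintro ⟨x, rfl⟩
          exact (hexG 1).apply_apply_eq_zero x.1
      · exact hexG (k+2)
    have hsum := ih ((J 0 ⧸ LinearMap.range fJ) × G 0) J' G' fJ' dJ' fG' dG'
      hJ'inj hJ'van hfJ' hexJ'0 hexJ' hG'inj hG'van hfG' hexG'0 hexG'
    cases n with
    | zero => exact injSummand_fst R hsum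
    | succ k => exact hsum

theorem horseshoe (n : ℕ) :
    ∀ (M P : Type u) [AddCommGroup M] [Module R M] [AddCommGroup P] [Module R P]
      (α : M →ₗ[R] P) (β : P →ₗ[R] M),
      Function.Injective α → Function.Exact α β → Function.Surjective β →
      ∀ (I : ℕ → Type u) [∀ i, AddCommGroup (I i)] [∀ i, Module R (I i)]
        (d : ∀ i, I i →ₗ[R] I (i+1)) (ι : M →ₗ[R] I 0),
        (∀ i, i < n → Module.Injective R (I i)) → (∀ i, n < i → Subsingleton (I i)) →
        Function.Injective ι → Function.Exact ι (d 0) →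
        (∀ i, Function.Exact (d i) (d (i+1))) →
        ∃ (J : ℕ → Type u) (_ : ∀ i, AddCommGroup (J i)) (_ : ∀ i, Module R (J i))
          (dJ : ∀ i, J i →ₗ[R] J (i+1)) (ιP : P →ₗ[R] J 0),
          (∀ i, i < n → Module.Injective R (J i)) ∧ (∀ i, n < i → Subsingleton (J i)) ∧
          Function.Injective ιP ∧ Function.Exact ιP (dJ 0) ∧
          (∀ i, Function.Exact (dJ i) (dJ (i+1))) ∧
          ∃ (u : I n →ₗ[R] J n) (v : J n →ₗ[R] I n),
            Function.Injective u ∧ Function.Exact u v ∧ Function.Surjective v := by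
  induction n with
  | zero =>
    intro M P _ _ _ _ α β hα hαβ hβ I _ _ d ι hinj hvan hι hex0 hex
    have hιsurj : Function.Surjective ι := fun y => by
      haveI : Subsingleton (I 1) := hvan 1 one_pos
      exact (hex0 y).mp (Subsingleton.elim _ _)
    let eι := LinearEquiv.ofBijective ι ⟨hι, hιsurj⟩
    haveI hsub : ∀ k : ℕ, Subsingleton (Cons P (fun _ => PUnit.{u+1}) (k+1)) :=
      fun k => inferInstanceAs (Subsingleton PUnit)
    refine ⟨Cons P (fun _ => PUnit.{u+1}), inferInstance, inferInstance,
      consMap R 0 (fun _ => 0), LinearMap.id, ?_, ?_, ?_, ?_, ?_, ?_⟩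
    · intro i hi; omega
    · rintro (_|k) hi
      · omega
      · exact inferInstanceAs (Subsingleton PUnit)
    · exact fun a b h => h
    · intro y
      constructor
      · intro _; exact ⟨y, rfl⟩
      · intro _; exact Subsingleton.elim _ _
    · rintro (_|k) <;> intro y
      · constructor
        · intro _
          exact ⟨0, Subsingleton.elim _ _⟩
        · intro _; exact Subsingleton.elim _ _
      · constructor
        · intro _
          exact ⟨0, Subsingleton.elim _ _⟩
        · intro _; exact Subsingleton.elim _ _
    · refine ⟨α.comp (eι.symm : I 0 →ₗ[R] M), ι.comp β, ?_, ?_, ?_⟩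
      · exact fun a b h => eι.symm.injective (hα h)
      · intro p
        constructor
        · intro hp
          have hp' : ι (β p) = 0 := hp
          have hb : β p = 0 := by
            apply hι; rw [map_zero]; exact hp'
          obtain ⟨m, hm⟩ := (hαβ p).mp hb
          refine ⟨eι m, ?_⟩
          show α (eι.symm (eι m)) = p
          rw [LinearEquiv.symm_apply_apply]
          exact hm
        · rintro ⟨x, rfl⟩
          show ι (β (α (eι.symm x))) = 0
          rw [hαβ.apply_apply_eq_zero, map_zero]
      · intro y
        obtain ⟨m, hm⟩ := hιsurj y
        obtain ⟨p, hp⟩ := hβ m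
        exact ⟨p, show ι (β p) = y by rw [hp, hm]⟩
  | succ n ih =>
    intro M P _ _ _ _ α β hα hαβ hβ I instI1 instI2 d ι hinj hvan hι hex0 hex
    obtain ⟨φ, hφ⟩ := (hinj 0 (Nat.succ_pos n)).out α hα ι
    let j : P →ₗ[R] I 0 × I 0 := φ.prod (ι.comp β)
    have hjapp : ∀ p, j p = (φ p, ι (β p)) := fun p => rfl
    have hjα : ∀ m, j (α m) = (ι m, 0) := by
      intro m
      rw [hjapp, hφ m, hαβ.apply_apply_eq_zero m, map_zero]
    have hj : Function.Injective j := by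
      intro a b hab
      have hab' : (φ a, ι (β a)) = (φ b, ι (β b)) := hab
      have h2 : ι (β a) = ι (β b) := congrArg Prod.snd hab'
      have hb : β (a - b) = 0 := by rw [map_sub, hι h2, sub_self]
      obtain ⟨m, hm⟩ := (hαβ _).mp hb
      have h1 : φ a = φ b := congrArg Prod.fst hab'
      have hφ0 : φ (a - b) = 0 := by rw [map_sub, h1, sub_self]
      rw [← hm, hφ] at hφ0
      have hm0 : m = 0 := hι (by rw [map_zero]; exact hφ0)
      rw [hm0, map_zero] at hm
      exact sub_eq_zero.mp hm.symm
    have hrangeι_ker : LinearMap.range ι ≤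
        LinearMap.ker (((LinearMap.range j).mkQ).comp (LinearMap.inl R (I 0) (I 0))) := by
      rintro x ⟨m, rfl⟩
      simp only [LinearMap.mem_ker, LinearMap.comp_apply, LinearMap.inl_apply,
        Submodule.mkQ_apply, Submodule.Quotient.mk_eq_zero]
      exact ⟨α m, hjα m⟩
    let u' : (I 0 ⧸ LinearMap.range ι) →ₗ[R] ((I 0 × I 0) ⧸ LinearMap.range j) :=
      (LinearMap.range ι).liftQ _ hrangeι_ker
    have hrangej_ker : LinearMap.range j ≤
        LinearMap.ker (((LinearMap.range ι).mkQ).comp (LinearMap.snd R (I 0) (I 0))) := by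
      rintro x ⟨p, rfl⟩
      simp only [LinearMap.mem_ker, LinearMap.comp_apply, LinearMap.snd_apply,
        Submodule.mkQ_apply, Submodule.Quotient.mk_eq_zero]
      exact ⟨β p, rfl⟩
    let v' : ((I 0 × I 0) ⧸ LinearMap.range j) →ₗ[R] (I 0 ⧸ LinearMap.range ι) :=
      (LinearMap.range j).liftQ _ hrangej_ker
    have hu' : Function.Injective u' := by
      intro a b hab
      obtain ⟨x, rfl⟩ := Submodule.Quotient.mk_surjective _ a
      obtain ⟨y, rfl⟩ := Submodule.Quotient.mk_surjective _ b
      have hab' : Submodule.Quotient.mk (p := LinearMap.range j) (x, (0 : I 0))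
          = Submodule.Quotient.mk (y, (0 : I 0)) := hab
      rw [Submodule.Quotient.eq] at hab' ⊢
      obtain ⟨p, hp⟩ := hab'
      rw [hjapp] at hp
      have h2 : ι (β p) = 0 := by
        have := congrArg Prod.snd hp; simpa using this
      have hb : β p = 0 := hι (by rw [map_zero]; exact h2)
      obtain ⟨m, hm⟩ := (hαβ p).mp hb
      have h1 : φ p = x - y := by
        have := congrArg Prod.fst hp; simpa using this
      rw [← hm, hφ] at h1
      exact ⟨m, h1⟩
    have hexact' : Function.Exact u' v' := by
      intro q
      obtain ⟨⟨x, y⟩, rfl⟩ := Submodule.Quotient.mk_surjective _ q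
      constructor
      · intro hq
        have hy : y ∈ LinearMap.range ι := by
          have h0 : Submodule.Quotient.mk (p := LinearMap.range ι) y = 0 := hq
          rwa [Submodule.Quotient.mk_eq_zero] at h0
        obtain ⟨m, hm⟩ := hy
        obtain ⟨p, hp⟩ := hβ m
        refine ⟨Submodule.Quotient.mk (x - φ p), ?_⟩
        show Submodule.Quotient.mk (x - φ p, (0 : I 0)) = Submodule.Quotient.mk (x, y)
        rw [Submodule.Quotient.eq]
        refine ⟨-p, ?_⟩
        have hιβ : ι (β p) = y := by rw [hp]; exact hm
        rw [map_neg, hjapp p, hιβ]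
        apply Prod.ext
        · show -(φ p) = x - φ p - x
          abel
        · show -y = 0 - y
          abel
      · rintro ⟨c, hc⟩
        obtain ⟨x0, rfl⟩ := Submodule.Quotient.mk_surjective _ c
        rw [← hc]
        show (Submodule.Quotient.mk (0 : I 0) : I 0 ⧸ LinearMap.range ι) = 0
        exact (Submodule.Quotient.mk_eq_zero _).mpr (Submodule.zero_mem _)
    have hv' : Function.Surjective v' := by
      intro q
      obtain ⟨y, rfl⟩ := Submodule.Quotient.mk_surjective _ q
      exact ⟨Submodule.Quotient.mk ((0 : I 0), y), rfl⟩
    have hexiff : LinearMap.ker (d 0) = LinearMap.range ι := LinearMap.exact_iff.mp hex0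
    let ι' : (I 0 ⧸ LinearMap.range ι) →ₗ[R] I 1 :=
      (LinearMap.range ι).liftQ (d 0) (le_of_eq hexiff.symm)
    have hι'inj : Function.Injective ι' := by
      rw [← LinearMap.ker_eq_bot]
      exact Submodule.ker_liftQ_eq_bot' _ _ hexiff.symm
    have hι'ex : Function.Exact ι' (d 1) := by
      intro y
      rw [hex 0 y]
      constructor
      · rintro ⟨x, rfl⟩
        exact ⟨Submodule.Quotient.mk x, rfl⟩
      · rintro ⟨c, rfl⟩
        obtain ⟨x, rfl⟩ := Submodule.Quotient.mk_surjective _ c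
        exact ⟨x, rfl⟩
    obtain ⟨J', iJ'1, iJ'2, dJ', ιP', hJ'inj, hJ'van, hιP'inj, hιP'ex, hdJ'ex,
        u'', v'', hu'', hexact'', hv''⟩ :=
      ih (I 0 ⧸ LinearMap.range ι) ((I 0 × I 0) ⧸ LinearMap.range j) u' v' hu' hexact' hv'
        (fun i => I (i+1)) (fun i => d (i+1)) ι'
        (fun i hi => hinj (i+1) (by omega)) (fun i hi => hvan (i+1) (by omega))
        hι'inj hι'ex (fun i => hex (i+1))
    refine ⟨Cons (I 0 × I 0) J', consACG _ J', consMod R _ J',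
      consMap R (ιP'.comp (LinearMap.range j).mkQ) dJ', j, ?_, ?_, hj, ?_, ?_,
      u'', v'', hu'', hexact'', hv''⟩
    · rintro (_|k) hi
      · exact inj_prod R _ _ (hinj 0 (Nat.succ_pos n)) (hinj 0 (Nat.succ_pos n))
      · exact hJ'inj k (by omega)
    · rintro (_|k) hi
      · omega
      · exact hJ'van k (by omega)
    · intro y
      constructor
      · intro hy
        have hy' : ιP' (Submodule.Quotient.mk y) = 0 := hy
        have h0 : Submodule.Quotient.mk (p := LinearMap.range j) y = 0 := by
          apply hιP'inj; rw [map_zero]; exact hy'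
        replace h0 := (Submodule.Quotient.mk_eq_zero (LinearMap.range j) (x := (y : I 0 × I 0))).mp h0
        obtain ⟨p, hp⟩ := h0
        exact ⟨p, hp⟩
      · rintro ⟨p, rfl⟩
        show ιP' (Submodule.Quotient.mk (j p)) = 0
        rw [show (Submodule.Quotient.mk (j p) : _ ⧸ LinearMap.range j) = 0 from
          (Submodule.Quotient.mk_eq_zero _).mpr ⟨p, rfl⟩, map_zero]
    · rintro (_|k)
      · exact exact_comp_surj R (LinearMap.range j).mkQ ιP' (dJ' 0)
          (Submodule.Quotient.mk_surjective _) hιP'ex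
      · exact hdJ'ex k

end Aux

/-- If `M` is strongly Gorenstein projective, witnessed by a short exact sequence
`0 → M → P → M → 0` with `P` projective and `id_R(P) ≤ n`, and
`0 → M → I_0 → ⋯ → I_{n-1} → I_n → 0` is exact with `I_0, …, I_{n-1}` injective, then
there is a short exact sequence `0 → I_n → E_n → I_n → 0` with `E_n` injective. -/
theorem horseshoe_step (R : Type u) [Ring R]
    (M P : Type u) [AddCommGroup M] [Module R M] [AddCommGroup P] [Module R P] (n : ℕ)
    (α : M →ₗ[R] P) (β : P →ₗ[R] M)
    (hP : Module.Projective R P) (hses : IsSES R α β)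
    (hext : ∀ i : ℕ, 0 < i → ∀ (Q : Type u) (_ : AddCommGroup Q) (_ : Module R Q),
      Module.Projective R Q → extVanish R M Q i)
    (hid : iDim R P ≤ n)
    (I : ℕ → Type u) (instI1 : ∀ i, AddCommGroup (I i)) (instI2 : ∀ i, Module R (I i))
    (d : ∀ i, I i →ₗ[R] I (i + 1)) (ι : M →ₗ[R] I 0)
    (hinj : ∀ i, i < n → Module.Injective R (I i))
    (hvan : ∀ i, n < i → Subsingleton (I i))
    (hι : Function.Injective ι) (hex0 : Function.Exact ι (d 0))
    (hex : ∀ i, Function.Exact (d i) (d (i + 1))) :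
    ∃ (E : Type u) (_ : AddCommGroup E) (_ : Module R E)
      (u : I n →ₗ[R] E) (v : E →ₗ[R] I n),
        Module.Injective R E ∧ IsSES R u v := by
  obtain ⟨hα, hαβ, hβ⟩ := hses
  -- extract a finite injective coresolution of `P` of length `≤ n`
  have hne : ∃ m : ℕ, m ≤ n ∧
      HasRightResolutionLE R (fun N _ _ => Module.Injective R N) P m := by
    by_contra hcon
    push_neg at hcon
    have hge : (↑(n+1) : ℕ∞) ≤ iDim R P := by
      apply le_sInf
      rintro x ⟨m, hm, rfl⟩
      have hmn : ¬ m ≤ n := fun h => hcon m h hm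
      exact_mod_cast Nat.succ_le_of_lt (Nat.not_le.mp hmn)
    have hle := le_trans hge hid
    exact absurd hle (by exact_mod_cast Nat.not_succ_le_self n)
  obtain ⟨m, hmn, G, iG1, iG2, dG, ιG, hGinj, hGvan, hιGinj, hιGex0, hιGex⟩ := hne
  -- horseshoe construction: an injective coresolution of `P` ending in an
  -- extension of `I n` by `I n`
  obtain ⟨J, iJ1, iJ2, dJ, ιP, hJinj, hJvan, hιPinj, hιPex0, hιPex, u, v, hu, huv, hv⟩ :=
    horseshoe R n M P α β hα hαβ hβ I d ι hinj hvan hι hex0 hex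
  -- compare the two coresolutions of `P` via Schanuel's lemma
  have hsummand : IsInjSummand R (J n) :=
    sch R n P J G ιP dJ ιG dG hJinj hJvan hιPinj hιPex0 hιPex
      (fun i => hGinj i) (fun i hi => hGvan i (lt_of_le_of_lt hmn hi))
      hιGinj hιGex0 hιGex
  exact ⟨J n, iJ1 n, iJ2 n, u, v, injSummand_injective R _ hsummand, hu, huv, hv⟩
end
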